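/- arXiv:1902.00572 — 9 statements merged into one kernel-verified Lean document; each statement's English description precedes it below -/
import Mathlib

section
/- Let n be a positive integer, let A be a tournament matrix of order n, and let z be a real number with 1/2 ≤ z ≤ 1 such that σ₃(A) = (z³ + (1−z)³)/8. Then σ₄(A) ≥ (z⁴ + (1−z)⁴)/16. -/
/-!
Write `2 • A = J + S` with `J = vecMulVec 1 1` the all-ones matrix and `S = A - Aᵀ`
skew-symmetric. Since `J` has rank one, every trace of a word in `J` and `S` collapses to
quadratic forms `1 ⬝ᵥ S ^ k *ᵥ 1`, which vanish for odd `k`; this gives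
`8 tr A³ = n³ - 3 P` and `16 tr A⁴ = n⁴ - 4 n P + tr S⁴` with `P = |S 1|²`. The hypothesis on
`σ₃` pins down `P = z (1 - z) n³`, and the claim becomes `n² tr S⁴ ≥ 2 P²`. For that, note
`tr S⁴ = ‖S²‖²_F` and `1 ⊥ S 1`: Bessel's inequality for `S²` against the Frobenius-orthogonal
matrices `vecMulVec 1 1` and `vecMulVec (S 1) (S 1)`, with suitably chosen coefficients, gives
`tr S⁴ ≥ 2 |S² 1|² / n`, and Cauchy–Schwarz applied to `1 ⬝ᵥ S² 1 = -P` gives `n |S² 1|² ≥ P²`.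
-/

open Matrix

namespace Matrix

section TraceExpansion

variable {ι R : Type*} [Fintype ι] [DecidableEq ι] [CommRing R]

theorem trace_add_pow_three (X Y : Matrix ι ι R) :
    trace ((X + Y) ^ 3) =
      trace (X ^ 3) + 3 * trace (X ^ 2 * Y) + 3 * trace (X * Y ^ 2) + trace (Y ^ 3) := by
  simp only [pow_succ, pow_zero, Matrix.one_mul, add_mul, mul_add, ← Matrix.mul_assoc, trace_add,
    (trace_mul_cycle Y X X).symm, (trace_mul_cycle X X Y).symm,
    (trace_mul_cycle Y X Y).symm, (trace_mul_cycle X Y Y).symm]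
  ring

theorem trace_add_pow_four (X Y : Matrix ι ι R) :
    trace ((X + Y) ^ 4) =
      trace (X ^ 4) + 4 * trace (X ^ 3 * Y) + 4 * trace (X ^ 2 * Y ^ 2)
        + 2 * trace (X * Y * X * Y) + 4 * trace (X * Y ^ 3) + trace (Y ^ 4) := by
  have rot (A B C D : Matrix ι ι R) : trace (A * B * C * D) = trace (B * C * D * A) := by
    rw [Matrix.mul_assoc A B C, Matrix.mul_assoc A, trace_mul_comm]
  simp only [pow_succ, pow_zero, Matrix.one_mul, add_mul, mul_add, ← Matrix.mul_assoc, trace_add,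
    (rot X X X Y).symm, (rot X X Y X).symm, (rot X Y X X).symm,
    (rot X X Y Y).symm, (rot X Y Y X).symm, (rot Y Y X X).symm, (rot X Y X Y).symm,
    (rot X Y Y Y).symm, (rot Y X Y Y).symm, (rot Y Y X Y).symm]
  ring

end TraceExpansion

section RankOne

variable {ι R : Type*} [Fintype ι] [CommRing R]

theorem trace_vecMulVec_mul (u v : ι → R) (X : Matrix ι ι R) :
    trace (vecMulVec u v * X) = v ⬝ᵥ X *ᵥ u := by
  rw [vecMulVec_mul, trace_vecMulVec, dotProduct_comm, dotProduct_mulVec]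

theorem vecMulVec_mul_mul_vecMulVec (u v x y : ι → R) (X : Matrix ι ι R) :
    vecMulVec u v * X * vecMulVec x y = (v ⬝ᵥ X *ᵥ x) • vecMulVec u y := by
  rw [vecMulVec_mul, vecMulVec_mul_vecMulVec, ← dotProduct_mulVec, vecMulVec_smul]

theorem vecMulVec_self_pow_succ [DecidableEq ι] (u : ι → R) (k : ℕ) :
    vecMulVec u u ^ (k + 1) = (u ⬝ᵥ u) ^ k • vecMulVec u u := by
  induction k with
  | zero => simp
  | succ k ih =>
    rw [pow_succ, ih, smul_mul, vecMulVec_mul_vecMulVec, vecMulVec_smul, smul_smul, pow_succ]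

theorem trace_vecMulVec_self_pow_succ_mul [DecidableEq ι] (u : ι → R) (k : ℕ)
    (X : Matrix ι ι R) :
    trace (vecMulVec u u ^ (k + 1) * X) = (u ⬝ᵥ u) ^ k * (u ⬝ᵥ X *ᵥ u) := by
  rw [vecMulVec_self_pow_succ, smul_mul, trace_smul, trace_vecMulVec_mul, smul_eq_mul]

theorem trace_vecMulVec_self_pow_succ [DecidableEq ι] (u : ι → R) (k : ℕ) :
    trace (vecMulVec u u ^ (k + 1)) = (u ⬝ᵥ u) ^ (k + 1) := by
  simpa [pow_succ] using trace_vecMulVec_self_pow_succ_mul u k 1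

end RankOne

section FrobeniusBound

variable {ι : Type*} [Fintype ι]

theorem sq_dotProduct_le_dotProduct_self_mul_dotProduct_self (x y : ι → ℝ) :
    (x ⬝ᵥ y) ^ 2 ≤ (x ⬝ᵥ x) * (y ⬝ᵥ y) := by
  simpa only [dotProduct, sq] using Finset.sum_mul_sq_le_sq_mul_sq Finset.univ x y

-- Bessel's inequality for `M` against the orthogonal pair `vecMulVec x x`, `vecMulVec y y`,
-- in division-free form: expand `0 ≤ ∑ (M i j - a x i x j - b y i y j) ^ 2`.
theorem two_mul_dotProduct_mulVec_add_le_sum_sq (M : Matrix ι ι ℝ) {x y : ι → ℝ}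
    (hxy : x ⬝ᵥ y = 0) (a b : ℝ) :
    2 * a * (x ⬝ᵥ M *ᵥ x) + 2 * b * (y ⬝ᵥ M *ᵥ y) - a ^ 2 * (x ⬝ᵥ x) ^ 2
      - b ^ 2 * (y ⬝ᵥ y) ^ 2 ≤ ∑ i, ∑ j, M i j ^ 2 := by
  have hxy' : ∑ i, x i * y i = 0 := hxy
  calc _ = ∑ i, ∑ j, (2 * a * (x i * (M i j * x j)) + 2 * b * (y i * (M i j * y j))
          - a ^ 2 * (x i * x i * (x j * x j)) - b ^ 2 * (y i * y i * (y j * y j))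
          - 2 * a * b * (x i * y i * (x j * y j))) := by
        simp only [dotProduct, mulVec, Finset.sum_add_distrib, Finset.sum_sub_distrib,
          ← Finset.mul_sum, ← Finset.sum_mul, hxy']
        ring
    _ ≤ ∑ i, ∑ j, M i j ^ 2 := by
        gcongr with i _ j _
        nlinarith [sq_nonneg (M i j - a * x i * x j - b * y i * y j)]

theorem trace_mul_self_of_transpose_eq (M : Matrix ι ι ℝ) (hM : Mᵀ = M) :
    trace (M * M) = ∑ i, ∑ j, M i j ^ 2 := by
  simp only [trace, diag_apply, mul_apply, sq]
  refine Finset.sum_congr rfl fun i _ => Finset.sum_congr rfl fun j _ => ?_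
  have hji : M j i = M i j := by rw [← transpose_apply M i j, hM]
  rw [hji]

end FrobeniusBound

section Skew

variable {ι : Type*} [Fintype ι] {S : Matrix ι ι ℝ}

theorem dotProduct_mulVec_of_transpose_eq_neg (hS : Sᵀ = -S) (x y : ι → ℝ) :
    x ⬝ᵥ S *ᵥ y = -(S *ᵥ x ⬝ᵥ y) := by
  rw [dotProduct_mulVec, ← mulVec_transpose, hS, neg_mulVec, neg_dotProduct]

theorem dotProduct_mulVec_self_of_transpose_eq_neg (hS : Sᵀ = -S) (x : ι → ℝ) :
    x ⬝ᵥ S *ᵥ x = 0 := by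
  have h := dotProduct_mulVec_of_transpose_eq_neg hS x x
  rw [dotProduct_comm (S *ᵥ x)] at h
  linarith

theorem trace_eq_zero_of_transpose_eq_neg (hS : Sᵀ = -S) : trace S = 0 := by
  have h := trace_transpose S
  rw [hS, trace_neg] at h
  linarith

variable [DecidableEq ι]

theorem transpose_pow_of_transpose_eq_neg_of_odd (hS : Sᵀ = -S) {k : ℕ} (hk : Odd k) :
    (S ^ k)ᵀ = -S ^ k := by
  rw [transpose_pow, hS, hk.neg_pow]

theorem transpose_pow_of_transpose_eq_neg_of_even (hS : Sᵀ = -S) {k : ℕ} (hk : Even k) :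
    (S ^ k)ᵀ = S ^ k := by
  rw [transpose_pow, hS, hk.neg_pow]

theorem dotProduct_sq_mulVec_of_transpose_eq_neg (hS : Sᵀ = -S) (x : ι → ℝ) :
    x ⬝ᵥ (S ^ 2) *ᵥ x = -(S *ᵥ x ⬝ᵥ S *ᵥ x) := by
  rw [sq, ← mulVec_mulVec, dotProduct_mulVec_of_transpose_eq_neg hS]

theorem trace_vecMulVec_self_add_pow_three (hS : Sᵀ = -S) (u : ι → ℝ) :
    trace ((vecMulVec u u + S) ^ 3) = (u ⬝ᵥ u) ^ 3 - 3 * (S *ᵥ u ⬝ᵥ S *ᵥ u) := by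
  have hS3 := transpose_pow_of_transpose_eq_neg_of_odd hS (k := 3) (by decide)
  rw [trace_add_pow_three, trace_vecMulVec_self_pow_succ, trace_vecMulVec_self_pow_succ_mul,
    ← pow_one (vecMulVec u u), trace_vecMulVec_self_pow_succ_mul,
    dotProduct_mulVec_self_of_transpose_eq_neg hS, dotProduct_sq_mulVec_of_transpose_eq_neg hS,
    trace_eq_zero_of_transpose_eq_neg hS3]
  ring

theorem trace_vecMulVec_self_add_pow_four (hS : Sᵀ = -S) (u : ι → ℝ) :
    trace ((vecMulVec u u + S) ^ 4) =
      (u ⬝ᵥ u) ^ 4 - 4 * (u ⬝ᵥ u) * (S *ᵥ u ⬝ᵥ S *ᵥ u) + trace (S ^ 4) := by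
  have hS3 := transpose_pow_of_transpose_eq_neg_of_odd hS (k := 3) (by decide)
  rw [trace_add_pow_four, vecMulVec_mul_mul_vecMulVec, smul_mul, trace_smul,
    trace_vecMulVec_self_pow_succ, trace_vecMulVec_self_pow_succ_mul,
    trace_vecMulVec_self_pow_succ_mul, ← pow_one (vecMulVec u u),
    trace_vecMulVec_self_pow_succ_mul, trace_vecMulVec_self_pow_succ_mul,
    dotProduct_mulVec_self_of_transpose_eq_neg hS, dotProduct_sq_mulVec_of_transpose_eq_neg hS,
    dotProduct_mulVec_self_of_transpose_eq_neg hS3]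
  ring

theorem two_mul_sq_dotProduct_mulVec_self_le_mul_trace_pow_four (hS : Sᵀ = -S) (u : ι → ℝ) :
    2 * (S *ᵥ u ⬝ᵥ S *ᵥ u) ^ 2 ≤ (u ⬝ᵥ u) ^ 2 * trace (S ^ 4) := by
  set m := u ⬝ᵥ u
  set P := S *ᵥ u ⬝ᵥ S *ᵥ u
  set W := S *ᵥ (S *ᵥ u) ⬝ᵥ S *ᵥ (S *ᵥ u)
  have hT : trace (S ^ 4) = ∑ i, ∑ j, (S ^ 2) i j ^ 2 := by
    rw [show S ^ 4 = S ^ 2 * S ^ 2 by rw [← pow_add]]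
    exact trace_mul_self_of_transpose_eq _ (transpose_pow_of_transpose_eq_neg_of_even hS even_two)
  rcases (show 0 ≤ m from Finset.sum_nonneg fun i _ => mul_self_nonneg (u i)).eq_or_lt with hm | hm
  · obtain rfl : u = 0 := dotProduct_self_eq_zero.mp hm.symm
    simp [m, P]
  have hCS : P ^ 2 ≤ m * W := by
    have h := sq_dotProduct_le_dotProduct_self_mul_dotProduct_self u (S *ᵥ (S *ᵥ u))
    rwa [dotProduct_mulVec_of_transpose_eq_neg hS, neg_sq] at h
  have hTW : 2 * W / m ≤ trace (S ^ 4) := by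
    have h := two_mul_dotProduct_mulVec_add_le_sum_sq (S ^ 2)
      (dotProduct_mulVec_self_of_transpose_eq_neg hS u) (-P / m ^ 2) (-1 / m)
    rw [dotProduct_sq_mulVec_of_transpose_eq_neg hS, dotProduct_sq_mulVec_of_transpose_eq_neg hS,
      ← hT] at h
    convert h using 1
    field_simp
    ring
  calc 2 * P ^ 2 ≤ 2 * W * m := by linarith
    _ = m ^ 2 * (2 * W / m) := by field_simp
    _ ≤ m ^ 2 * trace (S ^ 4) := by gcongr

end Skew

section Tournament

variable {ι : Type*}

theorem transpose_sub_transpose_self (A : Matrix ι ι ℝ) : (A - Aᵀ)ᵀ = -(A - Aᵀ) := by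
  rw [transpose_sub, transpose_transpose, neg_sub]

variable {A : Matrix ι ι ℝ}

theorem two_smul_eq_vecMulVec_one_add_sub_transpose (hA : A + Aᵀ = of fun _ _ => 1) :
    (2 : ℝ) • A = vecMulVec 1 1 + (A - Aᵀ) := by
  have hJ : vecMulVec (1 : ι → ℝ) 1 = A + Aᵀ := by
    rw [hA]
    ext
    simp [vecMulVec_apply]
  rw [hJ, two_smul]
  abel

variable [Fintype ι] [DecidableEq ι]

theorem eight_mul_trace_pow_three_of_add_transpose (hA : A + Aᵀ = of fun _ _ => 1) :
    8 * trace (A ^ 3) =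
      (Fintype.card ι : ℝ) ^ 3 - 3 * ((A - Aᵀ) *ᵥ 1 ⬝ᵥ (A - Aᵀ) *ᵥ 1) := by
  have h := trace_vecMulVec_self_add_pow_three (transpose_sub_transpose_self A) 1
  rw [← two_smul_eq_vecMulVec_one_add_sub_transpose hA, smul_pow, trace_smul,
    one_dotProduct_one, smul_eq_mul] at h
  linarith

theorem sixteen_mul_trace_pow_four_of_add_transpose (hA : A + Aᵀ = of fun _ _ => 1) :
    16 * trace (A ^ 4) = (Fintype.card ι : ℝ) ^ 4
      - 4 * Fintype.card ι * ((A - Aᵀ) *ᵥ 1 ⬝ᵥ (A - Aᵀ) *ᵥ 1) + trace ((A - Aᵀ) ^ 4) := by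
  have h := trace_vecMulVec_self_add_pow_four (transpose_sub_transpose_self A) 1
  rw [← two_smul_eq_vecMulVec_one_add_sub_transpose hA, smul_pow, trace_smul,
    one_dotProduct_one, smul_eq_mul] at h
  linarith

end Tournament

end Matrix

theorem stmt_1_general (n : ℕ) (hn : 0 < n) (A : Matrix (Fin n) (Fin n) ℝ)
    (hAT : A + A.transpose = Matrix.of fun _ _ => (1 : ℝ))
    (z : ℝ)
    (h3 : Matrix.trace (A ^ 3) / (n : ℝ) ^ 3 = (z ^ 3 + (1 - z) ^ 3) / 8) :
    Matrix.trace (A ^ 4) / (n : ℝ) ^ 4 ≥ (z ^ 4 + (1 - z) ^ 4) / 16 := by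
  have hn' : (0 : ℝ) < n := by exact_mod_cast hn
  have h3' := eight_mul_trace_pow_three_of_add_transpose hAT
  have h4' := sixteen_mul_trace_pow_four_of_add_transpose hAT
  have hS4 := two_mul_sq_dotProduct_mulVec_self_le_mul_trace_pow_four
    (transpose_sub_transpose_self A) 1
  simp only [Fintype.card_fin, one_dotProduct_one] at h3' h4' hS4
  generalize (A - Aᵀ) *ᵥ 1 ⬝ᵥ (A - Aᵀ) *ᵥ 1 = P at h3' h4' hS4
  generalize trace ((A - Aᵀ) ^ 4) = T at h4' hS4
  rw [div_eq_iff (by positivity)] at h3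
  obtain rfl : P = (z - z ^ 2) * n ^ 3 := by
    linear_combination (1 / 3 : ℝ) * h3' - (8 / 3 : ℝ) * h3
  have hT : 2 * (z - z ^ 2) ^ 2 * n ^ 4 ≤ T :=
    le_of_mul_le_mul_left (by linear_combination hS4) (pow_pos hn' 2)
  rw [ge_iff_le, le_div_iff₀ (by positivity)]
  linarith

/-- Regime of two parts: lower bound on σ₄ in terms of σ₃ for tournament matrices. -/
theorem stmt_1 (n : ℕ) (hn : 0 < n) (A : Matrix (Fin n) (Fin n) ℝ)
    (hA0 : ∀ i j, 0 ≤ A i j)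
    (hAT : A + A.transpose = Matrix.of fun _ _ => (1 : ℝ))
    (z : ℝ) (hz : 1/2 ≤ z) (hz1 : z ≤ 1)
    (h3 : Matrix.trace (A ^ 3) / (n : ℝ) ^ 3 = (z ^ 3 + (1 - z) ^ 3) / 8) :
    Matrix.trace (A ^ 4) / (n : ℝ) ^ 4 ≥ (z ^ 4 + (1 - z) ^ 4) / 16 :=
  stmt_1_general n hn A hAT z h3
end

section
/- Let n be a positive integer, let A be a tournament matrix of order n, and let z be a real number with 1/2 ≤ z ≤ 1 such that σ₃(A) = (z³ + (1−z)³)/8. If σ₄(A) = (z⁴ + (1−z)⁴)/16, then there exists a vector w ∈ ℝⁿ such that A_{i,j} = 1/2 + w_i − w_j for all i, j ∈ [n]. -/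
/-!
Write `A = S + J/2`, where `J = vecMulVec 1 1` is the all-ones matrix and `S` is skew-symmetric,
and let `s = S *ᵥ 1` and `n` be the order. Expanding the powers gives
`tr A³ = n³/8 - (3/2)|s|²` and `tr A⁴ = n⁴/16 - n|s|² + tr S⁴`, so the two hypotheses force
`n² tr S⁴ = 2|s|⁴`.

For skew `S` the symmetric matrix `X = n²S² + |s|²J + n ssᵀ` has `tr X² = n⁴ tr S⁴ - 2n³|Ss|²`,
and Cauchy–Schwarz `|s|⁴ = (1 ⬝ᵥ Ss)² ≤ n|Ss|²` makes this `≤ 0`, so `X = 0`. Its trace then reads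
`n² tr S² + 2n|s|² = 0`, which is `tr Y² = 0` for the skew matrix `Y = nS - (s1ᵀ - 1sᵀ)`.
Hence `Y = 0`, that is `A i j = 1/2 + s i/n - s j/n`.
-/

open Matrix

namespace Matrix

variable {ι R : Type*}

lemma transpose_sub_half_smul_vecMulVec_one_eq_neg {A : Matrix ι ι ℝ}
    (hA : A + Aᵀ = of fun _ _ => 1) :
    (A - (1 / 2 : ℝ) • vecMulVec 1 1)ᵀ = -(A - (1 / 2 : ℝ) • vecMulVec 1 1) := by
  have hJ : (of fun _ _ => 1 : Matrix ι ι ℝ) = vecMulVec 1 1 := by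
    ext
    simp [vecMulVec_apply]
  rw [hJ, ← eq_sub_iff_add_eq'] at hA
  rw [transpose_sub, hA, transpose_smul, transpose_vecMulVec]
  module

variable [Fintype ι]

lemma vecMulVec_mulVec_eq_smul [CommRing R] (u v w : ι → R) :
    vecMulVec u v *ᵥ w = (v ⬝ᵥ w) • u := by
  ext i
  simp [vecMulVec_mulVec, mul_comm]

section Skew

variable [CommRing R] {S : Matrix ι ι R}

lemma vecMul_eq_neg_mulVec_of_transpose_eq_neg (hS : Sᵀ = -S) (v : ι → R) :
    v ᵥ* S = -(S *ᵥ v) := by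
  rw [← mulVec_transpose, hS, neg_mulVec]

lemma dotProduct_mulVec_eq_neg_of_transpose_eq_neg (hS : Sᵀ = -S) (u v : ι → R) :
    u ⬝ᵥ S *ᵥ v = -(S *ᵥ u ⬝ᵥ v) := by
  rw [dotProduct_mulVec, vecMul_eq_neg_mulVec_of_transpose_eq_neg hS, neg_dotProduct]

variable [IsAddTorsionFree R]

lemma mulVec_dotProduct_self_eq_zero_of_transpose_eq_neg (hS : Sᵀ = -S) (v : ι → R) :
    S *ᵥ v ⬝ᵥ v = 0 := by
  have h := dotProduct_mulVec_eq_neg_of_transpose_eq_neg hS v v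
  rwa [dotProduct_comm, self_eq_neg] at h

lemma trace_mul_mul_eq_zero_of_transpose_eq_neg (hS : Sᵀ = -S) : trace (S * S * S) = 0 := by
  have h : trace (S * S * S)ᵀ = -trace (S * S * S) := by
    simp [transpose_mul, hS, Matrix.mul_assoc]
  rwa [trace_transpose, self_eq_neg] at h

variable [DecidableEq ι]

/- In the trace computations below, `simp` pushes every all-ones factor `vecMulVec 1 1` outwards
until each trace is a product of dot products `Sᵏ *ᵥ 1 ⬝ᵥ 1`; skewness moves all the `S` to the
left, and the odd `k` vanish. -/

theorem trace_add_smul_vecMulVec_one_pow_three (hS : Sᵀ = -S) (c : R) :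
    trace ((S + c • vecMulVec 1 1) ^ 3) =
      c ^ 3 * Fintype.card ι ^ 3 - 3 * c * (S *ᵥ 1 ⬝ᵥ S *ᵥ 1) := by
  have h1 := mulVec_dotProduct_self_eq_zero_of_transpose_eq_neg hS 1
  simp only [pow_succ, pow_zero, Matrix.one_mul, add_mul, mul_add, Matrix.smul_mul,
    Matrix.mul_smul, trace_add, trace_smul, mul_vecMulVec, vecMulVec_mul, trace_vecMulVec,
    ← mulVec_mulVec, smul_eq_mul, Matrix.one_mulVec, smul_mulVec, smul_dotProduct,
    vecMul_eq_neg_mulVec_of_transpose_eq_neg hS, mulVec_neg, neg_dotProduct, dotProduct_neg,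
    vecMulVec_mulVec_eq_smul, neg_neg, dotProduct_mulVec_eq_neg_of_transpose_eq_neg hS,
    mulVec_smul, h1, one_dotProduct_one, trace_mul_mul_eq_zero_of_transpose_eq_neg hS]
  ring

theorem trace_add_smul_vecMulVec_one_pow_four (hS : Sᵀ = -S) (c : R) :
    trace ((S + c • vecMulVec 1 1) ^ 4) = trace (S ^ 4) -
      4 * c ^ 2 * Fintype.card ι * (S *ᵥ 1 ⬝ᵥ S *ᵥ 1) + c ^ 4 * Fintype.card ι ^ 4 := by
  have h1 := mulVec_dotProduct_self_eq_zero_of_transpose_eq_neg hS 1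
  have h3 : S *ᵥ S *ᵥ S *ᵥ 1 ⬝ᵥ 1 = 0 := by
    simpa [dotProduct_mulVec_eq_neg_of_transpose_eq_neg hS] using
      mulVec_dotProduct_self_eq_zero_of_transpose_eq_neg hS (S *ᵥ 1)
  simp only [pow_succ, pow_zero, Matrix.one_mul, add_mul, mul_add, Matrix.smul_mul,
    Matrix.mul_smul, trace_add, trace_smul, mul_vecMulVec, vecMulVec_mul, trace_vecMulVec,
    ← mulVec_mulVec, smul_eq_mul, Matrix.one_mulVec, smul_mulVec, smul_dotProduct,
    vecMul_eq_neg_mulVec_of_transpose_eq_neg hS, mulVec_neg, neg_dotProduct, dotProduct_neg,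
    vecMulVec_mulVec_eq_smul, neg_neg, dotProduct_mulVec_eq_neg_of_transpose_eq_neg hS,
    mulVec_smul, h1, h3, one_dotProduct_one]
  ring

theorem trace_sq_card_sq_smul_mul_self_add (hS : Sᵀ = -S) :
    trace ((((Fintype.card ι : R) ^ 2) • (S * S) + (S *ᵥ 1 ⬝ᵥ S *ᵥ 1) • vecMulVec 1 1 +
        (Fintype.card ι : R) • vecMulVec (S *ᵥ 1) (S *ᵥ 1)) ^ 2) =
      Fintype.card ι ^ 4 * trace (S ^ 4) -
        2 * Fintype.card ι ^ 3 * (S *ᵥ S *ᵥ 1 ⬝ᵥ S *ᵥ S *ᵥ 1) := by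
  have h1 := mulVec_dotProduct_self_eq_zero_of_transpose_eq_neg hS 1
  simp only [pow_succ, pow_zero, Matrix.one_mul, add_mul, mul_add, Matrix.smul_mul,
    Matrix.mul_smul, trace_add, trace_smul, mul_vecMulVec, vecMulVec_mul, trace_vecMulVec,
    ← mulVec_mulVec, smul_eq_mul, Matrix.one_mulVec, smul_mulVec, smul_dotProduct,
    vecMul_eq_neg_mulVec_of_transpose_eq_neg hS, mulVec_neg, vecMulVec_mulVec_eq_smul, neg_neg,
    dotProduct_mulVec_eq_neg_of_transpose_eq_neg hS, mulVec_smul, h1, one_dotProduct_one,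
    ← Matrix.mul_assoc]
  ring

theorem trace_sq_card_smul_sub (hS : Sᵀ = -S) :
    trace (((Fintype.card ι : R) • S - (vecMulVec (S *ᵥ 1) 1 - vecMulVec 1 (S *ᵥ 1))) ^ 2) =
      Fintype.card ι ^ 2 * trace (S * S) + 2 * Fintype.card ι * (S *ᵥ 1 ⬝ᵥ S *ᵥ 1) := by
  have h1 := mulVec_dotProduct_self_eq_zero_of_transpose_eq_neg hS 1
  simp only [pow_succ, pow_zero, Matrix.one_mul, sub_mul, mul_sub, Matrix.smul_mul,
    Matrix.mul_smul, trace_sub, trace_smul, mul_vecMulVec, vecMulVec_mul, trace_vecMulVec,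
    smul_eq_mul, Matrix.one_mulVec, smul_mulVec, smul_dotProduct,
    vecMul_eq_neg_mulVec_of_transpose_eq_neg hS, dotProduct_neg, vecMulVec_mulVec_eq_smul,
    neg_neg, dotProduct_mulVec_eq_neg_of_transpose_eq_neg hS, mulVec_smul, h1, one_dotProduct_one]
  ring

end Skew

lemma sq_dotProduct_le (u v : ι → ℝ) : (u ⬝ᵥ v) ^ 2 ≤ (u ⬝ᵥ u) * (v ⬝ᵥ v) := by
  simpa only [dotProduct, sq] using Finset.sum_mul_sq_le_sq_mul_sq Finset.univ u v

lemma trace_transpose_mul_self_nonneg (X : Matrix ι ι ℝ) : 0 ≤ trace (Xᵀ * X) := by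
  simpa using (posSemidef_conjTranspose_mul_self X).trace_nonneg

lemma eq_zero_of_trace_transpose_mul_self_eq_zero {X : Matrix ι ι ℝ}
    (h : trace (Xᵀ * X) = 0) : X = 0 :=
  trace_conjTranspose_mul_self_eq_zero_iff.mp (by simpa using h)

variable [DecidableEq ι] {S : Matrix ι ι ℝ}

theorem card_sq_smul_mul_self_add_eq_zero (hS : Sᵀ = -S)
    (h : (Fintype.card ι : ℝ) ^ 2 * trace (S ^ 4) = 2 * (S *ᵥ 1 ⬝ᵥ S *ᵥ 1) ^ 2) :
    (Fintype.card ι : ℝ) ^ 2 • (S * S) + (S *ᵥ 1 ⬝ᵥ S *ᵥ 1) • vecMulVec 1 1 +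
      (Fintype.card ι : ℝ) • vecMulVec (S *ᵥ 1) (S *ᵥ 1) = 0 := by
  set X := (Fintype.card ι : ℝ) ^ 2 • (S * S) + (S *ᵥ 1 ⬝ᵥ S *ᵥ 1) • vecMulVec 1 1 +
    (Fintype.card ι : ℝ) • vecMulVec (S *ᵥ 1) (S *ᵥ 1) with hX
  have hX_symm : Xᵀ = X := by
    simp only [hX, transpose_add, transpose_smul, transpose_mul, hS, neg_mul_neg,
      transpose_vecMulVec]
  refine eq_zero_of_trace_transpose_mul_self_eq_zero
    (le_antisymm ?_ (trace_transpose_mul_self_nonneg X))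
  have hcs := sq_dotProduct_le 1 (S *ᵥ S *ᵥ 1)
  rw [one_dotProduct_one, dotProduct_mulVec_eq_neg_of_transpose_eq_neg hS] at hcs
  rw [hX_symm, ← sq, trace_sq_card_sq_smul_mul_self_add hS]
  nlinarith [sq_nonneg (Fintype.card ι : ℝ)]

theorem card_smul_eq_of_card_sq_mul_trace_pow_four_eq (hS : Sᵀ = -S)
    (h : (Fintype.card ι : ℝ) ^ 2 * trace (S ^ 4) = 2 * (S *ᵥ 1 ⬝ᵥ S *ᵥ 1) ^ 2) :
    (Fintype.card ι : ℝ) • S = vecMulVec (S *ᵥ 1) 1 - vecMulVec 1 (S *ᵥ 1) := by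
  have htrace : (Fintype.card ι : ℝ) ^ 2 * trace (S * S) +
      2 * Fintype.card ι * (S *ᵥ 1 ⬝ᵥ S *ᵥ 1) = 0 := by
    have := congrArg trace (card_sq_smul_mul_self_add_eq_zero hS h)
    simp only [trace_add, trace_smul, trace_vecMulVec, one_dotProduct_one, smul_eq_mul,
      trace_zero] at this
    linarith
  set Y := (Fintype.card ι : ℝ) • S - (vecMulVec (S *ᵥ 1) 1 - vecMulVec 1 (S *ᵥ 1)) with hY
  have hY_skew : Yᵀ = -Y := by
    simp only [hY, transpose_sub, transpose_smul, hS, transpose_vecMulVec, smul_neg]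
    abel
  rw [← sub_eq_zero]
  apply eq_zero_of_trace_transpose_mul_self_eq_zero
  rw [hY_skew, Matrix.neg_mul, trace_neg, ← sq, trace_sq_card_smul_sub hS, htrace, neg_zero]

end Matrix

theorem stmt_2_general (n : ℕ) (A : Matrix (Fin n) (Fin n) ℝ)
    (hAT : A + A.transpose = Matrix.of fun _ _ => (1 : ℝ))
    (z : ℝ)
    (h3 : Matrix.trace (A ^ 3) / (n : ℝ) ^ 3 = (z ^ 3 + (1 - z) ^ 3) / 8)
    (h4 : Matrix.trace (A ^ 4) / (n : ℝ) ^ 4 = (z ^ 4 + (1 - z) ^ 4) / 16) :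
    ∃ w : Fin n → ℝ, ∀ i j, A i j = 1/2 + w i - w j := by
  set S : Matrix (Fin n) (Fin n) ℝ := A - (1 / 2 : ℝ) • vecMulVec 1 1
  have hA : A = S + (1 / 2 : ℝ) • vecMulVec 1 1 := (sub_add_cancel _ _).symm
  have hS : Sᵀ = -S := transpose_sub_half_smul_vecMulVec_one_eq_neg hAT
  refine ⟨fun i => (S *ᵥ 1) i / n, fun i j => ?_⟩
  have hn : (n : ℝ) ≠ 0 := by have := i.pos; positivity
  rw [hA, trace_add_smul_vecMulVec_one_pow_three hS, Fintype.card_fin,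
    div_eq_iff (by positivity)] at h3
  rw [hA, trace_add_smul_vecMulVec_one_pow_four hS, Fintype.card_fin,
    div_eq_iff (by positivity)] at h4
  have hQ : (Fintype.card (Fin n) : ℝ) ^ 2 * trace (S ^ 4) = 2 * (S *ᵥ 1 ⬝ᵥ S *ᵥ 1) ^ 2 := by
    rw [Fintype.card_fin]
    -- `h3` says `|s|² = n³ z (1 - z) / 4`; substituted into `h4` it leaves `n² tr S⁴ = 2|s|⁴`.
    linear_combination (n : ℝ) ^ 2 * h4 +
      2 / 3 * (-(n : ℝ) ^ 3 + n ^ 3 * z * (1 - z) / 2 + 2 * (S *ᵥ 1 ⬝ᵥ S *ᵥ 1)) * h3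
  have hSij := congrFun₂ (card_smul_eq_of_card_sq_mul_trace_pow_four_eq hS hQ) i j
  simp only [Fintype.card_fin, Matrix.smul_apply, Matrix.sub_apply, vecMulVec_apply,
    Pi.one_apply, mul_one, one_mul, smul_eq_mul] at hSij
  rw [hA]
  simp only [Matrix.add_apply, Matrix.smul_apply, vecMulVec_apply, Pi.one_apply, mul_one,
    smul_eq_mul]
  field_simp
  linear_combination 2 * hSij

/-- Regime of two parts: characterization of equality. -/
theorem stmt_2 (n : ℕ) (hn : 0 < n) (A : Matrix (Fin n) (Fin n) ℝ)
    (hA0 : ∀ i j, 0 ≤ A i j)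
    (hAT : A + A.transpose = Matrix.of fun _ _ => (1 : ℝ))
    (z : ℝ) (hz : 1/2 ≤ z) (hz1 : z ≤ 1)
    (h3 : Matrix.trace (A ^ 3) / (n : ℝ) ^ 3 = (z ^ 3 + (1 - z) ^ 3) / 8)
    (h4 : Matrix.trace (A ^ 4) / (n : ℝ) ^ 4 = (z ^ 4 + (1 - z) ^ 4) / 16) :
    ∃ w : Fin n → ℝ, ∀ i j, A i j = 1/2 + w i - w j :=
  stmt_2_general n A hAT z h3 h4
end

section
/- Let n be a positive integer, let w ∈ ℝⁿ, and suppose the n×n matrix A defined by A_{i,j} = 1/2 + w_i − w_j is a tournament matrix (i.e., all its entries are non-negative). Then there exists a real number z with 1/2 ≤ z ≤ 1 such that σ₃(A) = (z³ + (1−z)³)/8 and σ₄(A) = (z⁴ + (1−z)⁴)/16; in particular σ₃(A) ≥ 1/32 and A achieves equality σ₄(A) = g(σ₃(A)) in the two-part regime. -/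
/-!
The matrix `A = J/2 + w 1ᵀ - 1 wᵀ` has rank at most two: `A = B C` with `B : n × 2`, `C : 2 × n`,
so `tr (A ^ k) = tr ((C B) ^ k)` for `k ≥ 1`. The `2 × 2` matrix `C B` has trace `n / 2` and
determinant `d = n ∑ wᵢ² - (∑ wᵢ)²`; writing its eigenvalues as `n z / 2` and `n (1 - z) / 2`
gives `tr (A ^ k) = (n / 2) ^ k (z ^ k + (1 - z) ^ k)`. Such a real `z ∈ [1/2, 1]` exists iff
`0 ≤ d ≤ n² / 16`, which is Cauchy–Schwarz together with Popoviciu's inequality, since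
nonnegativity of `A` confines all `wᵢ` to an interval of length `1 / 2`.
-/

open Finset Matrix

namespace Matrix

variable {m n R : Type*} [Fintype m] [Fintype n] [DecidableEq m] [DecidableEq n]

theorem mul_mul_pow_eq_pow_mul_mul [Semiring R] (B : Matrix m n R) (C : Matrix n m R) (k : ℕ) :
    B * (C * B) ^ k = (B * C) ^ k * B := by
  induction k with
  | zero => simp
  | succ k ih =>
    rw [pow_succ, ← Matrix.mul_assoc, ih, pow_succ, Matrix.mul_assoc, Matrix.mul_assoc,
      Matrix.mul_assoc]

theorem trace_pow_succ_mul_comm [CommSemiring R] (B : Matrix m n R) (C : Matrix n m R) (k : ℕ) :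
    trace ((B * C) ^ (k + 1)) = trace ((C * B) ^ (k + 1)) := by
  rw [pow_succ, ← Matrix.mul_assoc, ← mul_mul_pow_eq_pow_mul_mul, trace_mul_comm,
    ← Matrix.mul_assoc, ← pow_succ']

theorem sq_fin_two_eq [CommRing R] (M : Matrix (Fin 2) (Fin 2) R) :
    M ^ 2 = trace M • M - det M • 1 := by
  ext i j
  fin_cases i <;> fin_cases j <;>
    simp [sq, Matrix.mul_apply, trace_fin_two, det_fin_two] <;> ring

theorem trace_pow_fin_two [CommRing R] {M : Matrix (Fin 2) (Fin 2) R} {a b : R}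
    (htr : trace M = a + b) (hdet : det M = a * b) (k : ℕ) :
    trace (M ^ k) = a ^ k + b ^ k := by
  have step (k : ℕ) :
      trace (M ^ (k + 2)) = (a + b) * trace (M ^ (k + 1)) - a * b * trace (M ^ k) := by
    rw [pow_add, sq_fin_two_eq, htr, hdet]
    simp [Matrix.mul_sub, pow_succ, trace_sub, trace_smul]
  suffices ∀ k, trace (M ^ k) = a ^ k + b ^ k ∧
      trace (M ^ (k + 1)) = a ^ (k + 1) + b ^ (k + 1) from (this k).1
  intro k
  induction k with
  | zero => norm_num [htr]
  | succ k ih => exact ⟨ih.2, by rw [step, ih.1, ih.2]; ring⟩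

theorem trace_pow_succ_of_add_sub [CommRing R] (c : R) (w : n → R) {a b : R}
    (hab : a + b = Fintype.card n * c)
    (hprod : a * b = Fintype.card n * ∑ i, w i ^ 2 - (∑ i, w i) ^ 2) (k : ℕ) :
    trace ((of fun i j => c + w i - w j) ^ (k + 1)) = a ^ (k + 1) + b ^ (k + 1) := by
  set B : Matrix n (Fin 2) R := of fun i => ![c + w i, 1]
  set C : Matrix (Fin 2) n R := of ![fun _ => 1, -w]
  have hfactor : of (fun i j => c + w i - w j) = B * C := by
    ext i j
    simp only [B, C, of_apply, Matrix.mul_apply, Fin.sum_univ_two, cons_val_zero, cons_val_one,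
      cons_val_fin_one, Pi.neg_apply, mul_one, mul_neg, one_mul]
    ring
  have htr : trace (C * B) = a + b := by
    simp only [hab, B, C, trace_fin_two, Matrix.mul_apply, of_apply]
    simp [sum_add_distrib]
  have hdet : det (C * B) = a * b := by
    simp only [hprod, B, C, det_fin_two, Matrix.mul_apply, of_apply]
    simp only [cons_val_zero, cons_val_one, cons_val_fin_one, Pi.neg_apply, mul_add, one_mul,
      mul_one, mul_neg, neg_mul, sum_add_distrib, sum_neg_distrib, sum_const, card_univ,
      nsmul_eq_mul, ← sum_mul, sq]
    ring
  rw [hfactor, trace_pow_succ_mul_comm, trace_pow_fin_two htr hdet]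

end Matrix

/-- Popoviciu's inequality. -/
theorem card_mul_sum_sq_sub_sq_sum_le {ι : Type*} (s : Finset ι) (f : ι → ℝ) {m M : ℝ}
    (hf : ∀ i ∈ s, f i ∈ Set.Icc m M) :
    #s * ∑ i ∈ s, f i ^ 2 - (∑ i ∈ s, f i) ^ 2 ≤ #s ^ 2 * ((M - m) / 2) ^ 2 := by
  set c := (m + M) / 2
  have hshift : #s * ∑ i ∈ s, f i ^ 2 - (∑ i ∈ s, f i) ^ 2
      = #s * ∑ i ∈ s, (f i - c) ^ 2 - (∑ i ∈ s, (f i - c)) ^ 2 := by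
    simp only [sub_sq, sum_add_distrib, sum_sub_distrib, ← sum_mul, ← mul_sum, sum_const,
      nsmul_eq_mul]
    ring
  have hbound : ∑ i ∈ s, (f i - c) ^ 2 ≤ #s * ((M - m) / 2) ^ 2 := by
    rw [← nsmul_eq_mul, ← sum_const]
    refine sum_le_sum fun i hi => ?_
    obtain ⟨hm, hM⟩ := hf i hi
    have : ((M - m) / 2) ^ 2 - (f i - c) ^ 2 = (f i - m) * (M - f i) := by ring
    nlinarith [mul_nonneg (sub_nonneg.2 hm) (sub_nonneg.2 hM)]
  rw [hshift]
  nlinarith [sq_nonneg (∑ i ∈ s, (f i - c)), (Nat.cast_nonneg #s : (0 : ℝ) ≤ #s)]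

theorem exists_mul_one_sub_eq {u : ℝ} (h0 : 0 ≤ u) (h1 : u ≤ 1 / 4) :
    ∃ z : ℝ, 1 / 2 ≤ z ∧ z ≤ 1 ∧ z * (1 - z) = u := by
  set s := √(1 - 4 * u)
  have hs0 : 0 ≤ s := Real.sqrt_nonneg _
  have hs1 : s ≤ 1 := Real.sqrt_le_one.mpr (by linarith)
  have hs2 : s ^ 2 = 1 - 4 * u := Real.sq_sqrt (by linarith)
  exact ⟨(1 + s) / 2, by linarith, by linarith, by linear_combination -hs2 / 4⟩

/-- Matrices of the form 1/2 + wᵢ − wⱼ achieve equality in the two-part regime. -/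
theorem stmt_3 (n : ℕ) (hn : 0 < n) (w : Fin n → ℝ)
    (A : Matrix (Fin n) (Fin n) ℝ)
    (hA : ∀ i j, A i j = 1/2 + w i - w j)
    (hA0 : ∀ i j, 0 ≤ A i j) :
    ∃ z : ℝ, 1/2 ≤ z ∧ z ≤ 1 ∧
      Matrix.trace (A ^ 3) / (n : ℝ) ^ 3 = (z ^ 3 + (1 - z) ^ 3) / 8 ∧
      Matrix.trace (A ^ 4) / (n : ℝ) ^ 4 = (z ^ 4 + (1 - z) ^ 4) / 16 := by
  have hn' : (0 : ℝ) < n := by exact_mod_cast hn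
  set d := (n : ℝ) * ∑ i, w i ^ 2 - (∑ i, w i) ^ 2
  have hd0 : 0 ≤ d := sub_nonneg.2 <| by
    simpa using sq_sum_le_card_mul_sum_sq (s := univ) (f := w)
  have hd16 : d ≤ n ^ 2 / 16 := by
    obtain ⟨iM, -, hiM⟩ := univ.exists_max_image w ⟨⟨0, hn⟩, mem_univ _⟩
    have hmem (i) (_ : i ∈ univ) : w i ∈ Set.Icc (w iM - 1 / 2) (w iM) :=
      ⟨by linarith [hA0 i iM, hA i iM], hiM i (mem_univ i)⟩
    have hpop := card_mul_sum_sq_sub_sq_sum_le univ w hmem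
    simp only [card_univ, Fintype.card_fin] at hpop
    linarith
  obtain ⟨z, hz1, hz2, hz⟩ := exists_mul_one_sub_eq (u := 4 * d / n ^ 2)
    (by positivity) (by rw [div_le_iff₀ (by positivity)]; linarith)
  have htrace (k : ℕ) :
      trace (A ^ (k + 1)) = (n * z / 2) ^ (k + 1) + (n * (1 - z) / 2) ^ (k + 1) := by
    rw [show A = of fun i j => 1 / 2 + w i - w j from Matrix.ext hA]
    refine trace_pow_succ_of_add_sub _ w ?_ ?_ k
    · simp only [Fintype.card_fin]; ring
    · rw [Fintype.card_fin, show n * z / 2 * (n * (1 - z) / 2) = n ^ 2 * (z * (1 - z)) / 4 by ring,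
        hz]
      field_simp
      rfl
  refine ⟨z, hz1, hz2, ?_, ?_⟩
  · rw [htrace 2]; field_simp; ring
  · rw [htrace 3]; field_simp; ring
end

section
/- Let z ∈ (0,1] be a real number, let n be a positive integer, and let x₁,…,xₙ be non-negative real numbers such that x₁+⋯+xₙ = 1/2 and xᵢ ≤ z for every i ∈ [n]. Then x₁³+⋯+xₙ³ ≤ ⌊z⁻¹/2⌋·z³ + (1/2 − ⌊z⁻¹/2⌋·z)³, and equality holds if and only if all but at most one of x₁,…,xₙ are equal to 0 or to z. -/
/-!
Write `s = m z + r` with `m = ⌊s / z⌋` and `0 ≤ r < z`; the bound is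
`maxSumCubes z s = m z³ + r³`. Adding a coordinate `t ∈ [0, z]` raises the sum of cubes by `t³`
and the bound by at least `t³`, with equality when `t ∈ {0, z}`, so the bound and its equality
case for extreme coordinates follow by induction. Two coordinates `p, q` strictly inside `(0, z)`
can be replaced by `(p + q, 0)` or `(z, p + q - z)`, which keeps the sum and strictly increases
the sum of cubes; hence equality forces all but one coordinate to be extreme.
-/

open Finset

noncomputable def maxSumCubes (z s : ℝ) : ℝ :=
  ⌊s / z⌋ * z ^ 3 + (s - ⌊s / z⌋ * z) ^ 3

section maxSumCubes

variable {z : ℝ}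

lemma maxSumCubes_intCast_mul_add (hz : 0 < z) (k : ℤ) {r : ℝ} (hr0 : 0 ≤ r) (hrz : r < z) :
    maxSumCubes z (k * z + r) = k * z ^ 3 + r ^ 3 := by
  have hfloor : ⌊(k * z + r) / z⌋ = k := by
    rw [Int.floor_eq_iff, le_div_iff₀ hz, div_lt_iff₀ hz]
    constructor <;> nlinarith
  rw [maxSumCubes, hfloor]
  ring

lemma maxSumCubes_zero : maxSumCubes z 0 = 0 := by
  simp [maxSumCubes]

lemma maxSumCubes_add_self (hz : 0 < z) (s : ℝ) :
    maxSumCubes z (z + s) = z ^ 3 + maxSumCubes z s := by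
  have hfloor : ⌊(z + s) / z⌋ = ⌊s / z⌋ + 1 := by
    rw [add_div, div_self hz.ne', add_comm, Int.floor_add_one]
  rw [maxSumCubes, maxSumCubes, hfloor]
  push_cast
  ring

lemma maxSumCubes_of_le (hz : 0 < z) {t : ℝ} (ht0 : 0 ≤ t) (htz : t ≤ z) :
    maxSumCubes z t = t ^ 3 := by
  rcases htz.lt_or_eq with htz | rfl
  · simpa using maxSumCubes_intCast_mul_add hz 0 ht0 htz
  · simpa [maxSumCubes_zero] using maxSumCubes_add_self hz 0

lemma cube_add_maxSumCubes_le (hz : 0 < z) {t : ℝ} (ht0 : 0 ≤ t) (htz : t ≤ z) (s : ℝ) :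
    t ^ 3 + maxSumCubes z s ≤ maxSumCubes z (t + s) := by
  set m := ⌊s / z⌋
  set r := s - m * z
  have hr0 : 0 ≤ r := by
    have := Int.floor_le (s / z)
    rw [le_div_iff₀ hz] at this
    linarith
  have hrz : r < z := by
    have := Int.lt_floor_add_one (s / z)
    rw [div_lt_iff₀ hz] at this
    linarith
  have hs : maxSumCubes z s = m * z ^ 3 + r ^ 3 := rfl
  rcases lt_or_ge (r + t) z with hrt | hrt
  · have h := maxSumCubes_intCast_mul_add hz m (by linarith) hrt
    rw [show (m : ℝ) * z + (r + t) = t + s by ring] at h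
    rw [h, hs]
    nlinarith [mul_nonneg (mul_nonneg hr0 ht0) (add_nonneg hr0 ht0)]
  · have h := maxSumCubes_intCast_mul_add hz (m + 1) (r := r + t - z) (by linarith) (by linarith)
    rw [show ((m + 1 : ℤ) : ℝ) * z + (r + t - z) = t + s by push_cast; ring] at h
    rw [h, hs]
    push_cast
    -- `z³ + (r + t - z)³ - r³ - t³ = 3 (r + t) (z - r) (z - t)`
    nlinarith [mul_nonneg (mul_nonneg (add_nonneg hr0 ht0) (sub_nonneg.2 hrz.le))
      (sub_nonneg.2 htz)]

lemma cube_add_maxSumCubes_eq (hz : 0 < z) {t : ℝ} (ht : t = 0 ∨ t = z) (s : ℝ) :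
    t ^ 3 + maxSumCubes z s = maxSumCubes z (t + s) := by
  rcases ht with rfl | rfl
  · simp
  · exact (maxSumCubes_add_self hz s).symm

lemma cube_add_cube_add_maxSumCubes_lt (hz : 0 < z) {p q : ℝ} (hp0 : 0 < p) (hpz : p < z)
    (hq0 : 0 < q) (hqz : q < z) (s : ℝ) :
    p ^ 3 + q ^ 3 + maxSumCubes z s < maxSumCubes z (p + q + s) := by
  rcases le_or_gt (p + q) z with hpq | hpq
  · have := cube_add_maxSumCubes_le hz (by linarith) hpq s
    nlinarith [mul_pos (mul_pos hp0 hq0) (add_pos hp0 hq0)]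
  · have h₁ := cube_add_maxSumCubes_le hz (t := p + q - z) (by linarith) (by linarith) s
    have h₂ := cube_add_maxSumCubes_le hz hz.le le_rfl (p + q - z + s)
    rw [show z + (p + q - z + s) = p + q + s by ring] at h₂
    nlinarith [mul_pos (mul_pos (add_pos hp0 hq0) (sub_pos.2 hpz)) (sub_pos.2 hqz)]

end maxSumCubes

section sumCubes

variable {ι : Type*} {z : ℝ} (hz : 0 < z) (x : ι → ℝ)
include hz

lemma sum_cube_le_maxSumCubes (S : Finset ι) (hx0 : ∀ i ∈ S, 0 ≤ x i) (hxz : ∀ i ∈ S, x i ≤ z) :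
    ∑ i ∈ S, x i ^ 3 ≤ maxSumCubes z (∑ i ∈ S, x i) := by
  classical
  induction S using Finset.induction_on with
  | empty => simp [maxSumCubes_zero]
  | insert a S haS ih =>
    rw [sum_insert haS, sum_insert haS]
    have hS := ih (fun i hi => hx0 i (mem_insert_of_mem hi))
      (fun i hi => hxz i (mem_insert_of_mem hi))
    have ha := cube_add_maxSumCubes_le hz (hx0 a (mem_insert_self a S))
      (hxz a (mem_insert_self a S)) (∑ i ∈ S, x i)
    linarith

lemma sum_cube_add_maxSumCubes_eq (S : Finset ι) (hx : ∀ i ∈ S, x i = 0 ∨ x i = z) (c : ℝ) :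
    ∑ i ∈ S, x i ^ 3 + maxSumCubes z c = maxSumCubes z (∑ i ∈ S, x i + c) := by
  classical
  induction S using Finset.induction_on with
  | empty => simp
  | insert a S haS ih =>
    rw [sum_insert haS, sum_insert haS, add_assoc, add_assoc,
      ih (fun i hi => hx i (mem_insert_of_mem hi)),
      cube_add_maxSumCubes_eq hz (hx a (mem_insert_self a S))]

variable [Fintype ι] (hx0 : ∀ i, 0 ≤ x i) (hxz : ∀ i, x i ≤ z)
include hx0 hxz

lemma sum_cube_lt_maxSumCubes {i k : ι} (hik : i ≠ k) (hi0 : x i ≠ 0) (hiz : x i ≠ z)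
    (hk0 : x k ≠ 0) (hkz : x k ≠ z) :
    ∑ j, x j ^ 3 < maxSumCubes z (∑ j, x j) := by
  classical
  set R := (univ.erase i).erase k
  have hk : k ∈ univ.erase i := mem_erase.2 ⟨hik.symm, mem_univ k⟩
  have hsplit (f : ι → ℝ) : ∑ j, f j = f i + f k + ∑ j ∈ R, f j := by
    rw [add_assoc, add_sum_erase _ _ hk, add_sum_erase _ _ (mem_univ i)]
  have hR := sum_cube_le_maxSumCubes hz x R (fun j _ => hx0 j) (fun j _ => hxz j)
  have hlt := cube_add_cube_add_maxSumCubes_lt hz ((hx0 i).lt_of_ne' hi0) ((hxz i).lt_of_ne hiz)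
    ((hx0 k).lt_of_ne' hk0) ((hxz k).lt_of_ne hkz) (∑ j ∈ R, x j)
  rw [hsplit (fun j => x j ^ 3), hsplit x]
  linarith

lemma sum_cube_eq_maxSumCubes_iff [Nonempty ι] :
    ∑ i, x i ^ 3 = maxSumCubes z (∑ i, x i) ↔ ∃ j, ∀ i, i ≠ j → x i = 0 ∨ x i = z := by
  classical
  constructor
  · intro heq
    by_contra! hne
    obtain ⟨i, -, hi0, hiz⟩ := hne (Classical.arbitrary ι)
    obtain ⟨k, hki, hk0, hkz⟩ := hne i
    exact (sum_cube_lt_maxSumCubes hz x hx0 hxz hki hk0 hkz hi0 hiz).ne heq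
  · rintro ⟨j, hj⟩
    have hrest := sum_cube_add_maxSumCubes_eq hz x (univ.erase j)
      (fun i hi => hj i (ne_of_mem_erase hi)) (x j)
    rwa [maxSumCubes_of_le hz (hx0 j) (hxz j), sum_erase_add _ _ (mem_univ j),
      sum_erase_add _ _ (mem_univ j)] at hrest

end sumCubes

theorem stmt_5_general (z : ℝ) (hz0 : 0 < z) (n : ℕ) (hn : 0 < n)
    (x : Fin n → ℝ) (hx0 : ∀ i, 0 ≤ x i) (hxz : ∀ i, x i ≤ z)
    (hsum : ∑ i, x i = 1/2) :
    ∑ i, (x i) ^ 3 ≤ ((⌊z⁻¹ / 2⌋ : ℤ) : ℝ) * z ^ 3 + (1/2 - ((⌊z⁻¹ / 2⌋ : ℤ) : ℝ) * z) ^ 3 ∧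
    (∑ i, (x i) ^ 3 = ((⌊z⁻¹ / 2⌋ : ℤ) : ℝ) * z ^ 3 + (1/2 - ((⌊z⁻¹ / 2⌋ : ℤ) : ℝ) * z) ^ 3 ↔
      ∃ j : Fin n, ∀ i, i ≠ j → x i = 0 ∨ x i = z) := by
  have hM : maxSumCubes z (∑ i, x i) =
      ((⌊z⁻¹ / 2⌋ : ℤ) : ℝ) * z ^ 3 + (1/2 - ((⌊z⁻¹ / 2⌋ : ℤ) : ℝ) * z) ^ 3 := by
    rw [hsum, maxSumCubes, show (1 / 2 : ℝ) / z = z⁻¹ / 2 by ring]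
  have : Nonempty (Fin n) := Fin.pos_iff_nonempty.mp hn
  rw [← hM]
  exact ⟨sum_cube_le_maxSumCubes hz0 x univ (fun i _ => hx0 i) (fun i _ => hxz i),
    sum_cube_eq_maxSumCubes_iff hz0 x hx0 hxz⟩

/-- Bound on the sum of cubes of bounded non-negative reals summing to 1/2,
with characterization of equality. -/
theorem stmt_5 (z : ℝ) (hz0 : 0 < z) (hz1 : z ≤ 1) (n : ℕ) (hn : 0 < n)
    (x : Fin n → ℝ) (hx0 : ∀ i, 0 ≤ x i) (hxz : ∀ i, x i ≤ z)
    (hsum : ∑ i, x i = 1/2) :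
    ∑ i, (x i) ^ 3 ≤ ((⌊z⁻¹ / 2⌋ : ℤ) : ℝ) * z ^ 3 + (1/2 - ((⌊z⁻¹ / 2⌋ : ℤ) : ℝ) * z) ^ 3 ∧
    (∑ i, (x i) ^ 3 = ((⌊z⁻¹ / 2⌋ : ℤ) : ℝ) * z ^ 3 + (1/2 - ((⌊z⁻¹ / 2⌋ : ℤ) : ℝ) * z) ^ 3 ↔
      ∃ j : Fin n, ∀ i, i ≠ j → x i = 0 ∨ x i = z) :=
  stmt_5_general z hz0 n hn x hx0 hxz hsum
end

section
/- Let n be a positive integer and let x₁,…,xₙ be non-negative real numbers with x₁+⋯+xₙ = 1/2. Let z ∈ (0,1] be a real number such that x₁³+⋯+xₙ³ = (⌊1/z⌋·z³ + (1 − ⌊1/z⌋·z)³)/8. Then x₁⁴+⋯+xₙ⁴ ≥ (⌊1/z⌋·z⁴ + (1 − ⌊1/z⌋·z)⁴)/16. -/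
/-!
Put `y = 2x`, `K = ⌊1/z⌋` and `r = 1 - Kz = z · fract (1/z) ∈ [0, z)`: then `∑ y = Kz + r` and
`∑ y³ = Kz³ + r³`, the moments of `K` atoms at `z` and one at `r`, and the claim is
`∑ y⁴ ≥ Kz⁴ + r⁴`. For `p(t) = a t⁴ - b t³ + c t` with `a > 0` the two known moments turn
`∑ p(y) ≥ K p(z) + p(r)` into exactly this bound. Such a `p` is found in two cases, according
to how many `yᵢ` exceed `r`: if at most `K`, take `p ≥ 0` on `[0, r]`, `p(r) = 0` and with
minimum `p(z) ≤ 0` on `[0, ∞)`; otherwise take `p ≥ 0` on `[0, r]` and `p ≥ p(z) = p(r) ≥ 0`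
on `[r, ∞)`.
-/

open Finset

def quartic (a b c t : ℝ) : ℝ := a * t ^ 4 - b * t ^ 3 + c * t

theorem sum_quartic_eq {ι : Type*} [Fintype ι] (a b c : ℝ) (y : ι → ℝ) :
    ∑ i, quartic a b c (y i) = a * ∑ i, y i ^ 4 - b * ∑ i, y i ^ 3 + c * ∑ i, y i := by
  simp only [quartic, sum_add_distrib, sum_sub_distrib, mul_sum]

theorem le_sum_pow_four_of_le_sum_quartic {ι : Type*} [Fintype ι] {y : ι → ℝ} {K : ℕ}
    {z r a b c : ℝ} (ha : 0 < a) (h1 : ∑ i, y i = K * z + r)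
    (h3 : ∑ i, y i ^ 3 = K * z ^ 3 + r ^ 3)
    (hq : K * quartic a b c z + quartic a b c r ≤ ∑ i, quartic a b c (y i)) :
    K * z ^ 4 + r ^ 4 ≤ ∑ i, y i ^ 4 := by
  rw [sum_quartic_eq, h1, h3] at hq
  unfold quartic at hq
  refine le_of_mul_le_mul_left ?_ ha
  linarith

theorem card_mul_le_sum_of_le_of_nonneg {ι : Type*} [Fintype ι] (s : Finset ι) {f : ι → ℝ}
    {c : ℝ} (hs : ∀ i ∈ s, c ≤ f i) (hsc : ∀ i ∉ s, 0 ≤ f i) : #s * c ≤ ∑ i, f i :=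
  calc #s * c ≤ ∑ i ∈ s, f i := by simpa using card_nsmul_le_sum s f c hs
    _ ≤ ∑ i, f i := sum_le_sum_of_subset_of_nonneg (subset_univ s) fun i _ hi => hsc i hi

section Certificates

variable {z r t : ℝ}

/- The polynomials `p` of the two cases above: at most `K` ("few") or more than `K` ("many")
of the `yᵢ` exceed `r`. -/
def certFew (z r : ℝ) : ℝ → ℝ :=
  quartic (3 * z ^ 2 - r ^ 2) (4 * z ^ 3 - r ^ 3) (z ^ 2 * r ^ 2 * (4 * z - 3 * r))

def certMany (z r : ℝ) : ℝ → ℝ :=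
  quartic (2 * z + r) (3 * z ^ 2 + 2 * z * r + r ^ 2) (z ^ 2 * (z ^ 2 + 2 * z * r + 3 * r ^ 2))

theorem certFew_lead_pos (hr : 0 ≤ r) (hrz : r < z) : 0 < 3 * z ^ 2 - r ^ 2 := by nlinarith

theorem certFew_apply_right (z r : ℝ) : certFew z r r = 0 := by unfold certFew quartic; ring

theorem certFew_apply_self_nonpos (hr : 0 ≤ r) (hrz : r < z) : certFew z r z ≤ 0 := by
  have : certFew z r z = -(z ^ 3 * (z - r) ^ 2 * (z + 2 * r)) := by unfold certFew quartic; ring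
  have hz : 0 < z := hr.trans_lt hrz
  rw [this, neg_nonpos]; positivity

theorem certFew_apply_self_le (hr : 0 ≤ r) (hrz : r < z) (ht : 0 ≤ t) :
    certFew z r z ≤ certFew z r t := by
  have hz : 0 < z := hr.trans_lt hrz
  have hlin : 0 ≤ 2 * z ^ 3 - 2 * z * r ^ 2 + r ^ 3 := by
    nlinarith [mul_pos hz (mul_pos (sub_pos.2 hrz) (add_pos_of_pos_of_nonneg hz hr))]
  have hlead := (certFew_lead_pos hr hrz).le
  have : certFew z r t - certFew z r z = (t - z) ^ 2 * ((3 * z ^ 2 - r ^ 2) * t ^ 2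
      + (2 * z ^ 3 - 2 * z * r ^ 2 + r ^ 3) * t + z * (z - r) ^ 2 * (z + 2 * r)) := by
    unfold certFew quartic; ring
  rw [← sub_nonneg, this]; positivity

theorem certFew_nonneg (hr : 0 ≤ r) (hrz : r < z) (ht : 0 ≤ t) (htr : t ≤ r) :
    0 ≤ certFew z r t := by
  have : certFew z r t = t * (r - t) * ((r - t) * (z ^ 2 * (4 * z - 3 * r))
      + t * ((z - r) * (8 * z ^ 2 - z * r - r ^ 2)) + (3 * z ^ 2 - r ^ 2) * t * (r - t)) := by
    unfold certFew quartic; ring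
  have h1 : 0 ≤ r - t := sub_nonneg.2 htr
  have h2 : 0 ≤ z - r := sub_nonneg.2 hrz.le
  have h3 : 0 ≤ 4 * z - 3 * r := by linarith
  have h4 : 0 ≤ 8 * z ^ 2 - z * r - r ^ 2 := by nlinarith
  have h5 := (certFew_lead_pos hr hrz).le
  rw [this]; positivity

theorem certMany_lead_pos (hr : 0 ≤ r) (hrz : r < z) : 0 < 2 * z + r := by linarith

theorem certMany_apply_right (z r : ℝ) : certMany z r r = certMany z r z := by
  unfold certMany quartic; ring

theorem certMany_apply_self_nonneg (hr : 0 ≤ r) (hrz : r < z) : 0 ≤ certMany z r z := by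
  have : certMany z r z = r * z ^ 3 * (z + 2 * r) := by unfold certMany quartic; ring
  have hz : 0 < z := hr.trans_lt hrz
  rw [this]; positivity

theorem certMany_apply_self_le (hr : 0 ≤ r) (hrz : r < z) (ht : r ≤ t) :
    certMany z r z ≤ certMany z r t := by
  have hz : 0 < z := hr.trans_lt hrz
  have : certMany z r t - certMany z r z =
      (t - r) * (t - z) ^ 2 * ((2 * z + r) * t + z * (z + 2 * r)) := by
    unfold certMany quartic; ring
  have h1 : 0 ≤ t - r := sub_nonneg.2 ht
  have h2 : 0 ≤ t := hr.trans ht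
  rw [← sub_nonneg, this]; positivity

theorem certMany_nonneg (hr : 0 ≤ r) (hrz : r < z) (ht : 0 ≤ t) (htr : t ≤ r) :
    0 ≤ certMany z r t := by
  have hz : 0 < z := hr.trans_lt hrz
  have : certMany z r t = t * z ^ 3 * (z + 2 * r) + t * (r - t) *
      ((t + r) * (3 * z ^ 2 - z * r - r ^ 2 / 2) + (2 * z + r) * ((r - t) * (t + r / 2))) := by
    unfold certMany quartic; ring
  have h1 : 0 ≤ r - t := sub_nonneg.2 htr
  have h2 : 0 ≤ 3 * z ^ 2 - z * r - r ^ 2 / 2 := by nlinarith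
  rw [this]; positivity

end Certificates

theorem add_pow_four_le_sum_pow_four {ι : Type*} [Fintype ι] {y : ι → ℝ} (hy : ∀ i, 0 ≤ y i)
    {K : ℕ} {z r : ℝ} (hr : 0 ≤ r) (hrz : r < z) (h1 : ∑ i, y i = K * z + r)
    (h3 : ∑ i, y i ^ 3 = K * z ^ 3 + r ^ 3) : K * z ^ 4 + r ^ 4 ≤ ∑ i, y i ^ 4 := by
  classical
  set A := univ.filter fun i => r < y i
  have hA : ∀ i ∈ A, r < y i := fun i hi => (mem_filter.1 hi).2
  have hAc : ∀ i ∉ A, y i ≤ r := fun i hi => not_lt.1 fun h => hi (mem_filter.2 ⟨mem_univ i, h⟩)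
  rcases le_or_gt #A K with hAK | hAK
  · refine le_sum_pow_four_of_le_sum_quartic (certFew_lead_pos hr hrz) h1 h3
      (?_ : K * certFew z r z + certFew z r r ≤ ∑ i, certFew z r (y i))
    calc K * certFew z r z + certFew z r r = K * certFew z r z := by rw [certFew_apply_right]; ring
      _ ≤ #A * certFew z r z :=
        mul_le_mul_of_nonpos_right (by exact_mod_cast hAK) (certFew_apply_self_nonpos hr hrz)
      _ ≤ ∑ i, certFew z r (y i) := card_mul_le_sum_of_le_of_nonneg A
        (fun i _ => certFew_apply_self_le hr hrz (hy i))
        fun i hi => certFew_nonneg hr hrz (hy i) (hAc i hi)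
  · refine le_sum_pow_four_of_le_sum_quartic (certMany_lead_pos hr hrz) h1 h3
      (?_ : K * certMany z r z + certMany z r r ≤ ∑ i, certMany z r (y i))
    calc K * certMany z r z + certMany z r r = (K + 1 : ℕ) * certMany z r z := by
          rw [certMany_apply_right]; push_cast; ring
      _ ≤ #A * certMany z r z :=
        mul_le_mul_of_nonneg_right (by exact_mod_cast hAK) (certMany_apply_self_nonneg hr hrz)
      _ ≤ ∑ i, certMany z r (y i) := card_mul_le_sum_of_le_of_nonneg A
        (fun i hi => certMany_apply_self_le hr hrz (hA i hi).le)
        fun i hi => certMany_nonneg hr hrz (hy i) (hAc i hi)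

theorem stmt_6_general (n : ℕ) (x : Fin n → ℝ)
    (hx0 : ∀ i, 0 ≤ x i) (hsum : ∑ i, x i = 1/2)
    (z : ℝ) (hz0 : 0 < z)
    (h3 : ∑ i, (x i) ^ 3
        = (((⌊1/z⌋ : ℤ) : ℝ) * z ^ 3 + (1 - ((⌊1/z⌋ : ℤ) : ℝ) * z) ^ 3) / 8) :
    ∑ i, (x i) ^ 4
      ≥ (((⌊1/z⌋ : ℤ) : ℝ) * z ^ 4 + (1 - ((⌊1/z⌋ : ℤ) : ℝ) * z) ^ 4) / 16 := by
  have hfract : 1 - (⌊1/z⌋ : ℝ) * z = z * Int.fract (1/z) := by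
    rw [Int.fract, mul_sub, mul_one_div_cancel hz0.ne']; ring
  obtain ⟨K, hK⟩ := Int.eq_ofNat_of_zero_le (Int.floor_nonneg.2 (by positivity : (0:ℝ) ≤ 1/z))
  rw [hK, Int.cast_natCast] at hfract h3 ⊢
  have hr : 0 ≤ 1 - K * z := hfract ▸ mul_nonneg hz0.le (Int.fract_nonneg _)
  have hrz : 1 - K * z < z := hfract ▸ mul_lt_of_lt_one_right hz0 (Int.fract_lt_one _)
  have key := add_pow_four_le_sum_pow_four (y := fun i => 2 * x i)
    (fun i => by linarith [hx0 i]) hr hrz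
    (by rw [← mul_sum, hsum]; ring) (by simp only [mul_pow, ← mul_sum, h3]; ring)
  simp only [mul_pow, ← mul_sum] at key
  linarith

/-- Lemma of Linial and Morgenstern: x₁⁴+⋯+xₙ⁴ ≥ g(x₁³+⋯+xₙ³) for non-negative
reals summing to 1/2. -/
theorem stmt_6 (n : ℕ) (hn : 0 < n) (x : Fin n → ℝ)
    (hx0 : ∀ i, 0 ≤ x i) (hsum : ∑ i, x i = 1/2)
    (z : ℝ) (hz0 : 0 < z) (hz1 : z ≤ 1)
    (h3 : ∑ i, (x i) ^ 3
        = (((⌊1/z⌋ : ℤ) : ℝ) * z ^ 3 + (1 - ((⌊1/z⌋ : ℤ) : ℝ) * z) ^ 3) / 8) :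
    ∑ i, (x i) ^ 4
      ≥ (((⌊1/z⌋ : ℤ) : ℝ) * z ^ 4 + (1 - ((⌊1/z⌋ : ℤ) : ℝ) * z) ^ 4) / 16 :=
  stmt_6_general n x hx0 hsum z hz0 h3
end

section
/- Let n be a positive integer, let A be a tournament matrix of order n, and let μ₁,…,μₙ ∈ ℂ be the eigenvalues of A with multiplicity. Then Tr(A³) ≤ (Re μ₁)³ + ⋯ + (Re μₙ)³. -/
/-!
Over `ℂ`, `det (x - p(M)) = ∏ (x - p(μᵢ))` for every polynomial `p`, so the eigenvalues of `A³`
are the `μᵢ³` and `Tr(A³) = ∑ Re(μᵢ³)`. If `A v = μ v` with `v ≠ 0`, then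
`2 Re μ · ‖v‖² = v* (A + Aᵀ) v = |∑ vᵢ|² ≥ 0`, so `Re μ ≥ 0`, and hence
`Re(μ³) = (Re μ)³ - 3 Re μ (Im μ)² ≤ (Re μ)³`.
-/

open Polynomial Matrix
open scoped ComplexOrder

namespace Matrix

variable {n : Type*} [Fintype n] [DecidableEq n]

section AlgClosed

variable {K : Type*} [Field K] [IsAlgClosed K]

theorem card_roots_charpoly (M : Matrix n n K) :
    Multiset.card M.charpoly.roots = Fintype.card n := by
  rw [splits_iff_card_roots.mp (IsAlgClosed.splits _), charpoly_natDegree_eq_dim]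

theorem det_sub_scalar_eq_prod_roots_charpoly (M : Matrix n n K) (r : K) :
    (M - scalar n r).det = (M.charpoly.roots.map (· - r)).prod := by
  have heval := (IsAlgClosed.splits M.charpoly).eval_eq_prod_roots_of_monic M.charpoly_monic r
  rw [eval_charpoly] at heval
  rw [← neg_sub, det_neg, heval, ← card_roots_charpoly M, ← Multiset.card_map (r - ·),
    ← Multiset.prod_map_neg, Multiset.map_map]
  simp only [Function.comp_def, neg_sub]

/-- Both sides are multiplicative in `p`, so it suffices to check them on the linear factors of
`p` and on its leading coefficient. -/
theorem det_aeval_eq_prod_roots_charpoly (M : Matrix n n K) (p : K[X]) :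
    (aeval M p).det = (M.charpoly.roots.map (p.eval ·)).prod := by
  let detAeval : K[X] →* K := detMonoidHom.comp (aeval (R := K) M).toMonoidHom
  have hC (a : K) : detAeval (C a) = (M.charpoly.roots.map fun _ ↦ a).prod := by
    simp [detAeval, algebraMap_eq_diagonal, card_roots_charpoly]
  have hX (r : K) : detAeval (X - C r) = (M.charpoly.roots.map (· - r)).prod := by
    rw [← det_sub_scalar_eq_prod_roots_charpoly]
    simp [detAeval, algebraMap_eq_diagonal, Pi.algebraMap_def]
  have hsplit := IsAlgClosed.splits p
  change detAeval p = _
  conv_lhs => rw [hsplit.eq_prod_roots]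
  simp only [map_mul, map_multiset_prod, Multiset.map_map, Function.comp_def, hC, hX,
    hsplit.eval_eq_prod_roots, Multiset.prod_map_mul]
  rw [Multiset.prod_map_prod_map]

theorem charpoly_aeval_eq_prod_roots_charpoly (M : Matrix n n K) (p : K[X]) :
    (aeval M p).charpoly = ((M.charpoly.roots.map (p.eval ·)).map (X - C ·)).prod := by
  refine Polynomial.funext fun x ↦ ?_
  have hscalar : scalar n x - aeval M p = aeval M (C x - p) := by
    simp [algebraMap_eq_diagonal, Pi.algebraMap_def]
  rw [eval_charpoly, hscalar, det_aeval_eq_prod_roots_charpoly]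
  simp [eval_multiset_prod]

theorem roots_charpoly_aeval (M : Matrix n n K) (p : K[X]) :
    (aeval M p).charpoly.roots = M.charpoly.roots.map (p.eval ·) := by
  rw [charpoly_aeval_eq_prod_roots_charpoly, roots_multiset_prod_X_sub_C]

theorem trace_pow_eq_sum_roots_charpoly (M : Matrix n n K) (k : ℕ) :
    (M ^ k).trace = (M.charpoly.roots.map (· ^ k)).sum := by
  have htrace := trace_eq_sum_roots_charpoly (aeval M (X ^ k : K[X]))
  rw [roots_charpoly_aeval] at htrace
  simpa using htrace

end AlgClosed

theorem re_nonneg_of_isRoot_charpoly_of_posSemidef {𝕜 : Type*} [RCLike 𝕜] {M : Matrix n n 𝕜}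
    (hM : (M + Mᴴ).PosSemidef) {μ : 𝕜} (hμ : M.charpoly.IsRoot μ) : 0 ≤ RCLike.re μ := by
  obtain ⟨v, hv, hker⟩ : ∃ v ≠ 0, (scalar n μ - M) *ᵥ v = 0 :=
    exists_mulVec_eq_zero_iff.mpr (by rwa [← eval_charpoly])
  have heig : M *ᵥ v = μ • v := by
    rw [sub_mulVec, sub_eq_zero] at hker
    simpa [smul_eq_diagonal_mul] using hker.symm
  set s := star v ⬝ᵥ v
  have hs : 0 < s := dotProduct_star_self_pos_iff.mpr hv
  have hquad : star v ⬝ᵥ ((M + Mᴴ) *ᵥ v) = μ * s + star μ * s := by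
    rw [add_mulVec, dotProduct_add, dotProduct_mulVec _ Mᴴ, ← star_mulVec, heig, star_smul,
      dotProduct_smul, smul_dotProduct, smul_eq_mul, smul_eq_mul]
  obtain ⟨hs_re, hs_im⟩ := RCLike.pos_iff.mp hs
  have hnonneg := RCLike.nonneg_iff.mp (hM.dotProduct_mulVec_nonneg v)
  rw [hquad, ← add_mul, RCLike.star_def, RCLike.add_conj] at hnonneg
  have hprod : 0 ≤ 2 * RCLike.re μ * RCLike.re s := by simpa [hs_im] using hnonneg.1
  linarith [nonneg_of_mul_nonneg_left hprod hs_re]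

theorem re_nonneg_of_isRoot_charpoly_of_add_transpose_eq_one {A : Matrix n n ℝ}
    (hA : A + Aᵀ = of fun _ _ ↦ 1) {μ : ℂ} (hμ : (A.map Complex.ofReal).charpoly.IsRoot μ) :
    0 ≤ μ.re := by
  refine re_nonneg_of_isRoot_charpoly_of_posSemidef ?_ hμ
  have hsymm : A.map Complex.ofReal + (A.map Complex.ofReal)ᴴ = vecMulVec 1 (star 1) := by
    rw [← conjTranspose_map _ fun x ↦ (Complex.conj_ofReal x).symm,
      conjTranspose_eq_transpose_of_trivial, ← Matrix.map_add _ Complex.ofReal_add, hA]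
    ext
    simp [vecMulVec_apply]
  exact hsymm ▸ posSemidef_vecMulVec_self_star 1

end Matrix

theorem Complex.re_pow_three_le {z : ℂ} (hz : 0 ≤ z.re) : (z ^ 3).re ≤ z.re ^ 3 := by
  have hcube : (z ^ 3).re = z.re ^ 3 - 3 * z.re * z.im ^ 2 := by
    simp only [pow_succ, pow_zero, one_mul, mul_re, mul_im]
    ring
  rw [hcube]
  linarith [mul_nonneg hz (sq_nonneg z.im)]

theorem stmt_10_general (n : ℕ) (A : Matrix (Fin n) (Fin n) ℝ)
    (hAT : A + A.transpose = Matrix.of fun _ _ => (1 : ℝ))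
    (μ : Fin n → ℂ)
    (hμ : (A.map (Complex.ofReal : ℝ → ℂ)).charpoly.roots
        = Multiset.map μ Finset.univ.val) :
    Matrix.trace (A ^ 3) ≤ ∑ i, ((μ i).re) ^ 3 := by
  have htrace : ((A ^ 3).trace : ℂ) = ∑ i, μ i ^ 3 := by
    have hpow : (A ^ 3).map Complex.ofReal = A.map Complex.ofReal ^ 3 :=
      Matrix.map_pow A Complex.ofRealHom 3
    rw [← Complex.ofRealHom_eq_coe, AddMonoidHom.map_trace]
    change ((A ^ 3).map Complex.ofReal).trace = _
    rw [hpow, trace_pow_eq_sum_roots_charpoly, hμ, Multiset.map_map]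
    rfl
  have hroot (i : Fin n) : (A.map Complex.ofReal).charpoly.IsRoot (μ i) :=
    isRoot_of_mem_roots (hμ ▸ Multiset.mem_map_of_mem μ (Finset.mem_univ_val i))
  calc (A ^ 3).trace = ∑ i, (μ i ^ 3).re := by simpa using congrArg Complex.re htrace
    _ ≤ ∑ i, (μ i).re ^ 3 := Finset.sum_le_sum fun i _ ↦
      Complex.re_pow_three_le (re_nonneg_of_isRoot_charpoly_of_add_transpose_eq_one hAT (hroot i))

/-- The trace of the cube of a tournament matrix is at most the sum of cubes of
the real parts of its eigenvalues. -/
theorem stmt_10 (n : ℕ) (hn : 0 < n) (A : Matrix (Fin n) (Fin n) ℝ)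
    (hA0 : ∀ i j, 0 ≤ A i j)
    (hAT : A + A.transpose = Matrix.of fun _ _ => (1 : ℝ))
    (μ : Fin n → ℂ)
    (hμ : (A.map (Complex.ofReal : ℝ → ℂ)).charpoly.roots
        = Multiset.map μ Finset.univ.val) :
    Matrix.trace (A ^ 3) ≤ ∑ i, ((μ i).re) ^ 3 :=
  stmt_10_general n A hAT μ hμ
end

section
/- Let U be a tournament limit. Then t(C₃,U) = 1/2 − (3/2)·∫₀¹ (∫₀¹ U(x,y) dy)² dx. -/
open MeasureTheory

/-- The density of the directed triangle C₃ in a tournament limit. -/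
noncomputable def cycle3Density (W : ℝ → ℝ → ℝ) : ℝ :=
  ∫ x in Set.Icc (0:ℝ) 1, ∫ y in Set.Icc (0:ℝ) 1, ∫ z in Set.Icc (0:ℝ) 1,
    W x y * W y z * W z x

/-!
On every triple `x, y, z` of vertices of a tournament exactly one of five things happens: one of
the three vertices beats the other two, or the triple is a directed triangle in one of its two
orientations. For a tournament limit `W` the weights of these five events,
`W(x,y)W(x,z)`, `W(y,z)W(y,x)`, `W(z,x)W(z,y)`, `W(x,y)W(y,z)W(z,x)`, `W(x,z)W(z,y)W(y,x)`,
sum to `1` pointwise because `W(y,x) = 1 - W(x,y)`. Integrate over `[0,1]³`: since permuting the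
coordinates preserves the product measure, each out-star term integrates to
`∫ d(x)² dx` with `d(x) = ∫ W(x,y) dy`, and each triangle term to `t(C₃,W)`. Hence
`3 ∫ d² + 2 t(C₃,W) = 1`.
-/

open Set

section TripleProduct

variable {α β γ E : Type*} [MeasurableSpace α] [MeasurableSpace β] [MeasurableSpace γ]
  [NormedAddCommGroup E] {μ : Measure α} {ν : Measure β} {ρ : Measure γ}

theorem integral_prod_prod [NormedSpace ℝ E] [SFinite μ] [SFinite ν] [SFinite ρ]
    {f : α × β × γ → E} (hf : Integrable f (μ.prod (ν.prod ρ))) :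
    ∫ p, f p ∂μ.prod (ν.prod ρ) = ∫ x, ∫ y, ∫ z, f (x, y, z) ∂ρ ∂ν ∂μ := by
  rw [integral_prod _ hf]
  refine integral_congr_ae ?_
  filter_upwards [hf.prod_right_ae] with x hx
  exact integral_prod _ hx

theorem ae_prod_prod {p : α → Prop} {q : β → Prop} {r : γ → Prop} [SFinite ρ]
    (hp : ∀ᵐ x ∂μ, p x) (hq : ∀ᵐ y ∂ν, q y) (hr : ∀ᵐ z ∂ρ, r z) :
    ∀ᵐ w ∂μ.prod (ν.prod ρ), p w.1 ∧ q w.2.1 ∧ r w.2.2 := by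
  have hqr : ∀ᵐ v ∂ν.prod ρ, q v.1 ∧ r v.2 :=
    (Measure.quasiMeasurePreserving_fst.ae hq).and (Measure.quasiMeasurePreserving_snd.ae hr)
  exact (Measure.quasiMeasurePreserving_fst.ae hp).and (Measure.quasiMeasurePreserving_snd.ae hqr)

/-- `(x, y, z) ↦ (y, z, x)` -/
def MeasurableEquiv.prodRotate : α × β × γ ≃ᵐ β × γ × α :=
  MeasurableEquiv.prodComm.trans MeasurableEquiv.prodAssoc

/-- `(x, y, z) ↦ (x, z, y)` -/
def MeasurableEquiv.prodSwapRight : α × β × γ ≃ᵐ α × γ × β :=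
  MeasurableEquiv.prodCongr (.refl α) MeasurableEquiv.prodComm

variable [SFinite μ] [SFinite ν] [SFinite ρ]

theorem measurePreserving_prodRotate :
    MeasurePreserving (MeasurableEquiv.prodRotate : α × β × γ ≃ᵐ β × γ × α)
      (μ.prod (ν.prod ρ)) (ν.prod (ρ.prod μ)) :=
  (measurePreserving_prodAssoc ν ρ μ).comp Measure.measurePreserving_swap

theorem measurePreserving_prodSwapRight :
    MeasurePreserving (MeasurableEquiv.prodSwapRight : α × β × γ ≃ᵐ α × γ × β)
      (μ.prod (ν.prod ρ)) (μ.prod (ρ.prod ν)) :=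
  (MeasurePreserving.id μ).prod Measure.measurePreserving_swap

theorem integral_comp_prodRotate [NormedSpace ℝ E] (g : β × γ × α → E) :
    ∫ p, g (p.2.1, p.2.2, p.1) ∂μ.prod (ν.prod ρ) = ∫ q, g q ∂ν.prod (ρ.prod μ) :=
  measurePreserving_prodRotate.integral_comp' g

theorem integral_comp_prodSwapRight [NormedSpace ℝ E] (g : α × γ × β → E) :
    ∫ p, g (p.1, p.2.2, p.2.1) ∂μ.prod (ν.prod ρ) = ∫ q, g q ∂μ.prod (ρ.prod ν) :=
  measurePreserving_prodSwapRight.integral_comp' g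

theorem MeasureTheory.Integrable.comp_prodRotate {g : β × γ × α → E}
    (hg : Integrable g (ν.prod (ρ.prod μ))) :
    Integrable (fun p : α × β × γ => g (p.2.1, p.2.2, p.1)) (μ.prod (ν.prod ρ)) :=
  measurePreserving_prodRotate.integrable_comp_of_integrable hg

theorem MeasureTheory.Integrable.comp_prodSwapRight {g : α × γ × β → E}
    (hg : Integrable g (μ.prod (ρ.prod ν))) :
    Integrable (fun p : α × β × γ => g (p.1, p.2.2, p.2.1)) (μ.prod (ν.prod ρ)) :=
  measurePreserving_prodSwapRight.integrable_comp_of_integrable hg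

end TripleProduct

theorem outStars_add_cycles_eq_one {α : Type*} {S : Set α} {W : α → α → ℝ}
    (hsym : ∀ x ∈ S, ∀ y ∈ S, W x y + W y x = 1) {x y z : α}
    (hx : x ∈ S) (hy : y ∈ S) (hz : z ∈ S) :
    W x y * W x z + W y z * W y x + W z x * W z y
      + W x y * W y z * W z x + W x z * W z y * W y x = 1 := by
  rw [eq_sub_of_add_eq' (hsym y hy x hx), eq_sub_of_add_eq' (hsym z hz y hy),
    eq_sub_of_add_eq' (hsym x hx z hz)]
  ring

section Tournament

variable {α : Type*} [MeasurableSpace α] {μ : Measure α} [IsProbabilityMeasure μ]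
  {S : Set α} {W : α → α → ℝ}

theorem integrable_outStar (hW : Measurable (Function.uncurry W)) (hS : ∀ᵐ x ∂μ, x ∈ S)
    (hrange : ∀ x ∈ S, ∀ y ∈ S, W x y ∈ Icc (0 : ℝ) 1) :
    Integrable (fun p : α × α × α => W p.1 p.2.1 * W p.1 p.2.2) (μ.prod (μ.prod μ)) := by
  refine .of_mem_Icc 0 1 (by fun_prop) ?_
  filter_upwards [ae_prod_prod hS hS hS] with p ⟨hx, hy, hz⟩
  exact unitInterval.mul_mem (hrange _ hx _ hy) (hrange _ hx _ hz)

theorem integrable_cycle (hW : Measurable (Function.uncurry W)) (hS : ∀ᵐ x ∂μ, x ∈ S)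
    (hrange : ∀ x ∈ S, ∀ y ∈ S, W x y ∈ Icc (0 : ℝ) 1) :
    Integrable (fun p : α × α × α => W p.1 p.2.1 * W p.2.1 p.2.2 * W p.2.2 p.1)
      (μ.prod (μ.prod μ)) := by
  refine .of_mem_Icc 0 1 (by fun_prop) ?_
  filter_upwards [ae_prod_prod hS hS hS] with p ⟨hx, hy, hz⟩
  exact unitInterval.mul_mem (unitInterval.mul_mem (hrange _ hx _ hy) (hrange _ hy _ hz))
    (hrange _ hz _ hx)

theorem integral_outStar (hW : Measurable (Function.uncurry W)) (hS : ∀ᵐ x ∂μ, x ∈ S)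
    (hrange : ∀ x ∈ S, ∀ y ∈ S, W x y ∈ Icc (0 : ℝ) 1) :
    ∫ p, W p.1 p.2.1 * W p.1 p.2.2 ∂μ.prod (μ.prod μ) = ∫ x, (∫ y, W x y ∂μ) ^ 2 ∂μ := by
  simp only [integral_prod_prod (integrable_outStar hW hS hrange), integral_const_mul,
    integral_mul_const, sq]

theorem integral_cycle3_eq (hW : Measurable (Function.uncurry W)) (hS : ∀ᵐ x ∂μ, x ∈ S)
    (hrange : ∀ x ∈ S, ∀ y ∈ S, W x y ∈ Icc (0 : ℝ) 1)
    (hsym : ∀ x ∈ S, ∀ y ∈ S, W x y + W y x = 1) :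
    ∫ x, ∫ y, ∫ z, W x y * W y z * W z x ∂μ ∂μ ∂μ
      = 1 / 2 - 3 / 2 * ∫ x, (∫ y, W x y ∂μ) ^ 2 ∂μ := by
  set π := μ.prod (μ.prod μ)
  set outStar := fun p : α × α × α => W p.1 p.2.1 * W p.1 p.2.2
  set cycle := fun p : α × α × α => W p.1 p.2.1 * W p.2.1 p.2.2 * W p.2.2 p.1
  have houtStar : Integrable outStar π := integrable_outStar hW hS hrange
  have houtStar₁ : Integrable (fun p => outStar (p.2.1, p.2.2, p.1)) π :=
    houtStar.comp_prodRotate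
  have houtStar₂ : Integrable (fun p => outStar (p.2.2, p.1, p.2.1)) π :=
    houtStar₁.comp_prodRotate
  have hcycle : Integrable cycle π := integrable_cycle hW hS hrange
  have hcycle₁ : Integrable (fun p => cycle (p.1, p.2.2, p.2.1)) π :=
    hcycle.comp_prodSwapRight
  have hsum : ∫ p, (outStar p + outStar (p.2.1, p.2.2, p.1) + outStar (p.2.2, p.1, p.2.1)
      + cycle p + cycle (p.1, p.2.2, p.2.1)) ∂π = 1 := by
    rw [integral_congr_ae (g := fun _ => (1 : ℝ))]
    · simp
    filter_upwards [ae_prod_prod hS hS hS] with p ⟨hx, hy, hz⟩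
    exact outStars_add_cycles_eq_one hsym hx hy hz
  rw [integral_add (by exact ((houtStar.add houtStar₁).add houtStar₂).add hcycle) hcycle₁,
    integral_add (by exact (houtStar.add houtStar₁).add houtStar₂) hcycle,
    integral_add (by exact houtStar.add houtStar₁) houtStar₂, integral_add houtStar houtStar₁,
    integral_comp_prodRotate outStar, integral_comp_prodSwapRight cycle,
    show ∫ p, outStar (p.2.2, p.1, p.2.1) ∂π = ∫ p, outStar p ∂π from
      (integral_comp_prodRotate (fun q => outStar (q.2.1, q.2.2, q.1))).trans
        (integral_comp_prodRotate outStar)] at hsum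
  have houtStar_eq : ∫ p, outStar p ∂π = ∫ x, (∫ y, W x y ∂μ) ^ 2 ∂μ :=
    integral_outStar hW hS hrange
  have hcycle_eq : ∫ p, cycle p ∂π = ∫ x, ∫ y, ∫ z, W x y * W y z * W z x ∂μ ∂μ ∂μ :=
    integral_prod_prod hcycle
  linarith

end Tournament

/-- The identity t(C₃,U) = 1/2 − (3/2)·∫ (∫ U(x,y) dy)² dx for tournament limits. -/
theorem stmt_12 (U : ℝ → ℝ → ℝ)
    (hmeas : Measurable (Function.uncurry U))
    (hrange : ∀ x ∈ Set.Icc (0:ℝ) 1, ∀ y ∈ Set.Icc (0:ℝ) 1, U x y ∈ Set.Icc (0:ℝ) 1)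
    (hsym : ∀ x ∈ Set.Icc (0:ℝ) 1, ∀ y ∈ Set.Icc (0:ℝ) 1, U x y + U y x = 1) :
    cycle3Density U
      = 1/2 - 3/2 * ∫ x in Set.Icc (0:ℝ) 1, (∫ y in Set.Icc (0:ℝ) 1, U x y) ^ 2 := by
  have : IsProbabilityMeasure (volume.restrict (Icc (0 : ℝ) 1)) := ⟨by simp⟩
  exact integral_cycle3_eq hmeas (ae_restrict_mem measurableSet_Icc) hrange hsym
end

section
/- Let W be a tournament limit, let n be a positive integer, and let Z₁,…,Zₙ be a partition of [0,1] into measurable sets each of Lebesgue measure 1/n. Define the step function W' : [0,1]² → [0,1] by W'(x,y) = n²·∫_{Zᵢ×Zⱼ} W(x',y') dx' dy' whenever (x,y) ∈ Zᵢ×Zⱼ. Then t(C₃,W) ≤ t(C₃,W'). -/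
/-! Write `d(x) = ∫ W(x, y) dy` for the out-degree. Since `W(x, y) + W(y, x) = 1`, expanding
`W(z, x) = 1 - W(x, z)` and integrating out one vertex at a time gives
`t(C₃, W) = 1/2 - 3/2 ∫ d²` for every tournament limit. The step approximation `W'` is again a
tournament limit, and its out-degree on `Zᵢ` is the average of `d` over `Zᵢ`. By Jensen's
inequality on each part, averaging can only decrease `∫ d²`, so it can only increase `t(C₃, ·)`.
-/

open MeasureTheory

open Function Set

section UnitInterval

variable {β : Type*} [MeasurableSpace β] {μ : Measure β} {f : β → ℝ}

lemma integrable_of_mem_Icc [IsFiniteMeasure μ] (hf : Measurable f)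
    (h : ∀ x, f x ∈ Icc (0 : ℝ) 1) : Integrable f μ :=
  .of_bound hf.aestronglyMeasurable 1 (ae_of_all _ fun x => by
    rw [Real.norm_of_nonneg (h x).1]; exact (h x).2)

lemma integral_mem_Icc [IsProbabilityMeasure μ] (h : ∀ x, f x ∈ Icc (0 : ℝ) 1) :
    ∫ x, f x ∂μ ∈ Icc (0 : ℝ) 1 :=
  ⟨integral_nonneg fun x => (h x).1, by
    simpa using integral_mono_of_nonneg (ae_of_all _ fun x => (h x).1)
      (integrable_const (μ := μ) (1 : ℝ)) (ae_of_all _ fun x => (h x).2)⟩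

end UnitInterval

variable {α : Type*}

open Classical in
/-- Setting the value `1/2` off `s ×ˢ s` turns a tournament limit on `s` into a kernel that
satisfies the tournament identities everywhere. -/
noncomputable def extendByHalf (s : Set α) (V : α → α → ℝ) (x y : α) : ℝ :=
  if x ∈ s ∧ y ∈ s then V x y else 1 / 2

lemma extendByHalf_of_mem {s : Set α} {V : α → α → ℝ} {x y : α} (hx : x ∈ s)
    (hy : y ∈ s) : extendByHalf s V x y = V x y :=
  if_pos (⟨hx, hy⟩ : x ∈ s ∧ y ∈ s)

noncomputable def stepKernel {ι : Type*} [Fintype ι] (Z : ι → Set α) (c : ι → ι → ℝ)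
    (x y : α) : ℝ :=
  ∑ p : ι × ι, (Z p.1 ×ˢ Z p.2).indicator (fun _ => c p.1 p.2) (x, y)

lemma stepKernel_apply_of_mem {ι : Type*} [Fintype ι] {Z : ι → Set α} {c : ι → ι → ℝ}
    (hZd : Pairwise (Disjoint on Z)) {i j : ι} {x y : α} (hx : x ∈ Z i) (hy : y ∈ Z j) :
    stepKernel Z c x y = c i j := by
  rw [stepKernel, Finset.sum_eq_single (i, j)]
  · exact indicator_of_mem (mk_mem_prod hx hy) _
  · rintro ⟨i', j'⟩ _ hne
    refine indicator_of_notMem (fun h => hne ?_) _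
    exact Prod.ext (hZd.eq (not_disjoint_iff.2 ⟨x, h.1, hx⟩))
      (hZd.eq (not_disjoint_iff.2 ⟨y, h.2, hy⟩))
  · simp

variable [MeasurableSpace α]

structure IsTournamentKernel (V : α → α → ℝ) : Prop where
  measurable : Measurable (uncurry V)
  nonneg : ∀ x y, 0 ≤ V x y
  add_swap : ∀ x y, V x y + V y x = 1

noncomputable def outDegree (μ : Measure α) (V : α → α → ℝ) (x : α) : ℝ :=
  ∫ y, V x y ∂μ

noncomputable def commonOutDegree (μ : Measure α) (V : α → α → ℝ) (x y : α) : ℝ :=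
  ∫ z, V x z * V y z ∂μ

lemma commonOutDegree_comm (μ : Measure α) (V : α → α → ℝ) (x y : α) :
    commonOutDegree μ V x y = commonOutDegree μ V y x := by
  simp only [commonOutDegree, mul_comm]

namespace IsTournamentKernel

variable {V : α → α → ℝ}

lemma swap_eq (hV : IsTournamentKernel V) (x y : α) : V y x = 1 - V x y := by
  linarith [hV.add_swap x y]

lemma mem_Icc (hV : IsTournamentKernel V) (x y : α) : V x y ∈ Icc (0 : ℝ) 1 :=
  ⟨hV.nonneg x y, by linarith [hV.add_swap x y, hV.nonneg y x]⟩

lemma measurable_left (hV : IsTournamentKernel V) (x : α) : Measurable (V x) :=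
  hV.measurable.of_uncurry_left

section FiniteMeasure

variable {μ : Measure α} [IsFiniteMeasure μ]

lemma integrable_left (hV : IsTournamentKernel V) (x : α) : Integrable (V x) μ :=
  integrable_of_mem_Icc (hV.measurable_left x) (hV.mem_Icc x)

lemma integrable_prod (hV : IsTournamentKernel V) (ν : Measure α) [IsFiniteMeasure ν] :
    Integrable (uncurry V) (μ.prod ν) :=
  integrable_of_mem_Icc hV.measurable fun p => hV.mem_Icc p.1 p.2

lemma measurable_outDegree (hV : IsTournamentKernel V) : Measurable (outDegree μ V) :=
  (hV.measurable.stronglyMeasurable.integral_prod_right (ν := μ)).measurable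

lemma measurable_commonOutDegree (hV : IsTournamentKernel V) :
    Measurable (uncurry (commonOutDegree μ V)) := by
  have h : Measurable fun q : (α × α) × α => V q.1.1 q.2 * V q.1.2 q.2 :=
    (hV.measurable.comp (measurable_fst.fst.prodMk measurable_snd)).mul
      (hV.measurable.comp (measurable_fst.snd.prodMk measurable_snd))
  exact (h.stronglyMeasurable.integral_prod_right' (ν := μ)).measurable

end FiniteMeasure

section ProbabilityMeasure

variable {μ : Measure α} [IsProbabilityMeasure μ]

lemma integral_swap_eq (hV : IsTournamentKernel V) (y : α) :
    ∫ x, V x y ∂μ = 1 - outDegree μ V y := by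
  simp_rw [hV.swap_eq y]
  rw [integral_sub (integrable_const 1) (hV.integrable_left y), integral_const, probReal_univ,
    one_smul, outDegree]

lemma outDegree_mem_Icc (hV : IsTournamentKernel V) (x : α) :
    outDegree μ V x ∈ Icc (0 : ℝ) 1 :=
  integral_mem_Icc (hV.mem_Icc x)

lemma integrable_outDegree (hV : IsTournamentKernel V) : Integrable (outDegree μ V) μ :=
  integrable_of_mem_Icc hV.measurable_outDegree hV.outDegree_mem_Icc

lemma integrable_outDegree_sq (hV : IsTournamentKernel V) :
    Integrable (fun x => outDegree μ V x ^ 2) μ :=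
  integrable_of_mem_Icc (hV.measurable_outDegree.pow_const 2) fun x => by
    simpa [sq] using unitInterval.mul_mem (hV.outDegree_mem_Icc x) (hV.outDegree_mem_Icc x)

lemma integral_outDegree (hV : IsTournamentKernel V) : ∫ x, outDegree μ V x ∂μ = 1 / 2 := by
  have hswap : ∫ x, outDegree μ V x ∂μ = ∫ y, (1 - outDegree μ V y) ∂μ := by
    simp_rw [← hV.integral_swap_eq]
    exact integral_integral_swap (hV.integrable_prod μ)
  rw [integral_sub (integrable_const 1) hV.integrable_outDegree, integral_const, probReal_univ,
    one_smul] at hswap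
  linarith

lemma commonOutDegree_mem_Icc (hV : IsTournamentKernel V) (x y : α) :
    commonOutDegree μ V x y ∈ Icc (0 : ℝ) 1 :=
  integral_mem_Icc fun z => unitInterval.mul_mem (hV.mem_Icc x z) (hV.mem_Icc y z)

lemma integral_cycle3_inner (hV : IsTournamentKernel V) (x y : α) :
    ∫ z, V x y * V y z * V z x ∂μ
      = V x y * outDegree μ V y - V x y * commonOutDegree μ V x y := by
  have h : ∀ z, V x y * V y z * V z x = V x y * (V y z - V x z * V y z) := fun z => by
    rw [hV.swap_eq x z]; ring
  simp_rw [h]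
  rw [integral_const_mul, integral_sub (hV.integrable_left y)
    (integrable_of_mem_Icc (f := fun z => V x z * V y z)
      ((hV.measurable_left x).mul (hV.measurable_left y))
      fun z => unitInterval.mul_mem (hV.mem_Icc x z) (hV.mem_Icc y z))]
  exact mul_sub _ _ _

lemma integrable_mul_outDegree (hV : IsTournamentKernel V) :
    Integrable (fun p : α × α => V p.1 p.2 * outDegree μ V p.2) (μ.prod μ) :=
  integrable_of_mem_Icc (hV.measurable.mul (hV.measurable_outDegree.comp measurable_snd))
    fun p => unitInterval.mul_mem (hV.mem_Icc p.1 p.2) (hV.outDegree_mem_Icc p.2)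

lemma integrable_mul_commonOutDegree (hV : IsTournamentKernel V) :
    Integrable (fun p : α × α => V p.1 p.2 * commonOutDegree μ V p.1 p.2) (μ.prod μ) :=
  integrable_of_mem_Icc (hV.measurable.mul hV.measurable_commonOutDegree)
    fun p => unitInterval.mul_mem (hV.mem_Icc p.1 p.2) (hV.commonOutDegree_mem_Icc p.1 p.2)

lemma integral_integral_mul_outDegree (hV : IsTournamentKernel V) :
    ∫ x, ∫ y, V x y * outDegree μ V y ∂μ ∂μ
      = ∫ x, outDegree μ V x ∂μ - ∫ x, outDegree μ V x ^ 2 ∂μ := by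
  rw [integral_integral_swap (f := fun x y => V x y * outDegree μ V y) hV.integrable_mul_outDegree]
  simp_rw [integral_mul_const, hV.integral_swap_eq, sub_mul, one_mul, ← sq]
  exact integral_sub hV.integrable_outDegree hV.integrable_outDegree_sq

lemma integral_integral_commonOutDegree (hV : IsTournamentKernel V) :
    ∫ x, ∫ y, commonOutDegree μ V x y ∂μ ∂μ = ∫ z, (1 - outDegree μ V z) ^ 2 ∂μ := by
  have hrow : ∀ x,
      ∫ y, commonOutDegree μ V x y ∂μ = ∫ z, V x z * (1 - outDegree μ V z) ∂μ := by
    intro x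
    have hint : Integrable (fun p : α × α => V x p.2 * V p.1 p.2) (μ.prod μ) :=
      integrable_of_mem_Icc (((hV.measurable_left x).comp measurable_snd).mul hV.measurable)
        fun p => unitInterval.mul_mem (hV.mem_Icc x p.2) (hV.mem_Icc p.1 p.2)
    simp_rw [commonOutDegree, integral_integral_swap (f := fun y z => V x z * V y z) hint,
      integral_const_mul, hV.integral_swap_eq]
  have hint : Integrable (fun p : α × α => V p.1 p.2 * (1 - outDegree μ V p.2)) (μ.prod μ) :=
    integrable_of_mem_Icc
      (hV.measurable.mul (measurable_const.sub (hV.measurable_outDegree.comp measurable_snd)))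
      fun p => unitInterval.mul_mem (hV.mem_Icc p.1 p.2)
        (Icc.mem_iff_one_sub_mem.mp (hV.outDegree_mem_Icc p.2))
  simp_rw [hrow, integral_integral_swap (f := fun x z => V x z * (1 - outDegree μ V z)) hint,
    integral_mul_const, hV.integral_swap_eq, sq]

/-- The common out-degree is symmetric, so reversing every edge leaves this integral unchanged;
adding the two expressions uses `V x y + V y x = 1`. -/
lemma two_mul_integral_integral_mul_commonOutDegree (hV : IsTournamentKernel V) :
    2 * ∫ x, ∫ y, V x y * commonOutDegree μ V x y ∂μ ∂μ
      = ∫ x, ∫ y, commonOutDegree μ V x y ∂μ ∂μ := by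
  have h : ∀ x y, V y x * commonOutDegree μ V y x
      = commonOutDegree μ V x y - V x y * commonOutDegree μ V x y := fun x y => by
    rw [hV.swap_eq x y, commonOutDegree_comm]; ring
  have hswap : ∫ x, ∫ y, V x y * commonOutDegree μ V x y ∂μ ∂μ
      = ∫ x, ∫ y, commonOutDegree μ V x y - V x y * commonOutDegree μ V x y ∂μ ∂μ := by
    rw [integral_integral_swap (f := fun x y => V x y * commonOutDegree μ V x y)
      hV.integrable_mul_commonOutDegree]
    exact integral_congr_ae (ae_of_all _ fun x => integral_congr_ae (ae_of_all _ fun y => h x y))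
  have hc : Integrable (fun p : α × α => commonOutDegree μ V p.1 p.2) (μ.prod μ) :=
    integrable_of_mem_Icc hV.measurable_commonOutDegree
      fun p => hV.commonOutDegree_mem_Icc p.1 p.2
  rw [integral_integral_sub hc hV.integrable_mul_commonOutDegree] at hswap
  linarith

theorem integral_cycle3_eq (hV : IsTournamentKernel V) :
    ∫ x, ∫ y, ∫ z, V x y * V y z * V z x ∂μ ∂μ ∂μ
      = 1 / 2 - 3 / 2 * ∫ x, outDegree μ V x ^ 2 ∂μ := by
  have hsq : ∫ z, (1 - outDegree μ V z) ^ 2 ∂μ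
      = 1 - 2 * ∫ x, outDegree μ V x ∂μ + ∫ x, outDegree μ V x ^ 2 ∂μ := by
    have hd : Integrable (fun x => 1 - 2 * outDegree μ V x) μ :=
      (integrable_const 1).sub (hV.integrable_outDegree.const_mul 2)
    simp_rw [sub_sq, one_pow, mul_one]
    rw [integral_add hd hV.integrable_outDegree_sq,
      integral_sub (integrable_const 1) (hV.integrable_outDegree.const_mul 2), integral_const_mul,
      integral_const, probReal_univ, one_smul]
  simp_rw [hV.integral_cycle3_inner]
  rw [integral_integral_sub hV.integrable_mul_outDegree hV.integrable_mul_commonOutDegree,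
    hV.integral_integral_mul_outDegree]
  linarith [hV.two_mul_integral_integral_mul_commonOutDegree (μ := μ), hsq,
    hV.integral_integral_commonOutDegree (μ := μ), hV.integral_outDegree (μ := μ)]

end ProbabilityMeasure

end IsTournamentKernel

lemma isTournamentKernel_extendByHalf {s : Set α} {V : α → α → ℝ} (hs : MeasurableSet s)
    (hV : Measurable (uncurry V)) (h0 : ∀ x ∈ s, ∀ y ∈ s, 0 ≤ V x y)
    (h1 : ∀ x ∈ s, ∀ y ∈ s, V x y + V y x = 1) : IsTournamentKernel (extendByHalf s V) where
  measurable := Measurable.ite (p := fun q : α × α => q.1 ∈ s ∧ q.2 ∈ s) (hs.prod hs) hV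
    measurable_const
  nonneg x y := by
    unfold extendByHalf
    split_ifs with h
    exacts [h0 x h.1 y h.2, by norm_num]
  add_swap x y := by
    by_cases hx : x ∈ s <;> by_cases hy : y ∈ s <;> simp [extendByHalf, hx, hy, h1] <;> norm_num

lemma measurable_stepKernel {ι : Type*} [Fintype ι] {Z : ι → Set α} {c : ι → ι → ℝ}
    (hZm : ∀ i, MeasurableSet (Z i)) : Measurable (uncurry (stepKernel Z c)) :=
  Finset.measurable_sum _ fun p _ => measurable_const.indicator ((hZm p.1).prod (hZm p.2))

lemma isTournamentKernel_extendByHalf_stepKernel {ι : Type*} [Fintype ι] {Z : ι → Set α}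
    {c : ι → ι → ℝ} (hZm : ∀ i, MeasurableSet (Z i)) (hZd : Pairwise (Disjoint on Z))
    (hc0 : ∀ i j, 0 ≤ c i j) (hc : ∀ i j, c i j + c j i = 1) :
    IsTournamentKernel (extendByHalf (⋃ i, Z i) (stepKernel Z c)) := by
  refine isTournamentKernel_extendByHalf (.iUnion hZm) (measurable_stepKernel hZm) ?_ ?_ <;>
  · intro x hx y hy
    obtain ⟨i, hi⟩ := mem_iUnion.1 hx
    obtain ⟨j, hj⟩ := mem_iUnion.1 hy
    simp only [stepKernel_apply_of_mem hZd hi hj, stepKernel_apply_of_mem hZd hj hi, hc0, hc]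

noncomputable def blockAverage (μ : Measure α) (V : α → α → ℝ) (s t : Set α) : ℝ :=
  (μ.real s * μ.real t)⁻¹ * ∫ x in s, ∫ y in t, V x y ∂μ ∂μ

section BlockAverage

variable {μ : Measure α} {V : α → α → ℝ} {s t : Set α}

lemma blockAverage_nonneg (hV : ∀ x y, 0 ≤ V x y) : 0 ≤ blockAverage μ V s t :=
  mul_nonneg (by positivity) (integral_nonneg fun x => integral_nonneg fun y => hV x y)

lemma IsTournamentKernel.blockAverage_add_swap [IsFiniteMeasure μ] (hV : IsTournamentKernel V)
    (hs : μ s ≠ 0) (ht : μ t ≠ 0) : blockAverage μ V s t + blockAverage μ V t s = 1 := by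
  have hint' : Integrable (fun p : α × α => V p.2 p.1) ((μ.restrict s).prod (μ.restrict t)) :=
    integrable_of_mem_Icc (hV.measurable.comp measurable_swap) fun p => hV.mem_Icc p.2 p.1
  have hswap : ∫ x in t, ∫ y in s, V x y ∂μ ∂μ = ∫ x in s, ∫ y in t, V y x ∂μ ∂μ :=
    (integral_integral_swap hint').symm
  have hsum : ∫ x in s, ∫ y in t, V x y ∂μ ∂μ + ∫ x in s, ∫ y in t, V y x ∂μ ∂μ
      = μ.real s * μ.real t := by
    rw [← integral_integral_add (f := fun p => V p.1 p.2) (hV.integrable_prod _) hint']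
    simp_rw [hV.add_swap, setIntegral_const, smul_eq_mul, mul_one]
  have hs' : μ.real s ≠ 0 := (ENNReal.toReal_pos hs (measure_ne_top μ s)).ne'
  have ht' : μ.real t ≠ 0 := (ENNReal.toReal_pos ht (measure_ne_top μ t)).ne'
  rw [blockAverage, blockAverage, hswap, mul_comm (μ.real t), ← mul_add, hsum]
  field_simp

lemma blockAverage_eq_of_measure_eq {n : ℕ} (hs : μ s = ENNReal.ofReal (1 / n))
    (ht : μ t = ENNReal.ofReal (1 / n)) :
    blockAverage μ V s t = (n : ℝ) ^ 2 * ∫ x in s, ∫ y in t, V x y ∂μ ∂μ := by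
  rw [blockAverage, measureReal_def, measureReal_def, hs, ht,
    ENNReal.toReal_ofReal (by positivity)]
  field_simp

end BlockAverage

section Partition

variable {ι : Type*} [Fintype ι] {μ : Measure α} {Z : ι → Set α}

lemma integral_eq_sum_setIntegral (hZm : ∀ i, MeasurableSet (Z i))
    (hZd : Pairwise (Disjoint on Z)) (hZ : ∀ᵐ x ∂μ, x ∈ ⋃ i, Z i) {f : α → ℝ}
    (hf : ∀ i, IntegrableOn f (Z i) μ) : ∫ x, f x ∂μ = ∑ i, ∫ x in Z i, f x ∂μ := by
  rw [← (integral_iUnion hZm hZd (integrableOn_finite_iUnion.2 hf)).trans (tsum_fintype _),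
    Measure.restrict_eq_self_of_ae_mem hZ]

lemma setIntegral_sq_setAverage_le [IsFiniteMeasure μ] {s : Set α} {f : α → ℝ}
    (hf : IntegrableOn f s μ) (hf2 : IntegrableOn (fun x => f x ^ 2) s μ) :
    ∫ _ in s, (⨍ x in s, f x ∂μ) ^ 2 ∂μ ≤ ∫ x in s, f x ^ 2 ∂μ := by
  rw [setIntegral_const, smul_eq_mul]
  rcases eq_or_ne (μ s) 0 with hs | hs
  · simp [Measure.real, hs, Measure.restrict_eq_zero.2 hs]
  have hJensen := (even_two.convexOn_pow (𝕜 := ℝ)).map_set_average_le (continuousOn_pow 2)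
    isClosed_univ hs (measure_ne_top μ s) (ae_of_all _ fun _ => mem_univ _) hf hf2
  rw [setAverage_eq (f := fun x => f x ^ 2), smul_eq_mul] at hJensen
  have hpos : 0 < μ.real s := ENNReal.toReal_pos hs (measure_ne_top μ s)
  calc μ.real s * (⨍ x in s, f x ∂μ) ^ 2
      ≤ μ.real s * ((μ.real s)⁻¹ * ∫ x in s, f x ^ 2 ∂μ) := by gcongr
    _ = ∫ x in s, f x ^ 2 ∂μ := by field_simp

lemma integral_sq_le_of_eq_setAverage [IsFiniteMeasure μ] (hZm : ∀ i, MeasurableSet (Z i))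
    (hZd : Pairwise (Disjoint on Z)) (hZ : ∀ᵐ x ∂μ, x ∈ ⋃ i, Z i) {f g : α → ℝ}
    (hf : Integrable f μ) (hf2 : Integrable (fun x => f x ^ 2) μ)
    (hg : ∀ i, ∀ x ∈ Z i, g x = ⨍ x' in Z i, f x' ∂μ) :
    ∫ x, g x ^ 2 ∂μ ≤ ∫ x, f x ^ 2 ∂μ := by
  have hgZ : ∀ i, EqOn (fun x => g x ^ 2) (fun _ => (⨍ x' in Z i, f x' ∂μ) ^ 2) (Z i) :=
    fun i x hx => by simp only [hg i x hx]
  have hg2 : ∀ i, IntegrableOn (fun x => g x ^ 2) (Z i) μ :=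
    fun i => (integrableOn_const (measure_ne_top μ _)).congr_fun (hgZ i).symm (hZm i)
  rw [integral_eq_sum_setIntegral hZm hZd hZ hg2,
    integral_eq_sum_setIntegral hZm hZd hZ fun i => hf2.integrableOn]
  refine Finset.sum_le_sum fun i _ => ?_
  rw [setIntegral_congr_fun (hZm i) (hgZ i)]
  exact setIntegral_sq_setAverage_le hf.integrableOn hf2.integrableOn

lemma outDegree_eq_setAverage [IsFiniteMeasure μ] {V V' : α → α → ℝ}
    (hZm : ∀ i, MeasurableSet (Z i)) (hZd : Pairwise (Disjoint on Z))
    (hZ : ∀ᵐ x ∂μ, x ∈ ⋃ i, Z i) (hZpos : ∀ i, μ (Z i) ≠ 0)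
    (hV : IsTournamentKernel V) (hV' : IsTournamentKernel V')
    (hblock : ∀ i j, ∀ x ∈ Z i, ∀ y ∈ Z j, V' x y = blockAverage μ V (Z i) (Z j))
    {i : ι} {x : α} (hx : x ∈ Z i) :
    outDegree μ V' x = ⨍ x' in Z i, outDegree μ V x' ∂μ := by
  have hrow : outDegree μ V' x = ∑ j, μ.real (Z j) * blockAverage μ V (Z i) (Z j) := by
    rw [outDegree, integral_eq_sum_setIntegral hZm hZd hZ fun j =>
      (hV'.integrable_left x).integrableOn]
    refine Finset.sum_congr rfl fun j _ => ?_
    rw [setIntegral_congr_fun (hZm j) fun y hy => hblock i j x hx y hy, setIntegral_const,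
      smul_eq_mul]
  have hcol : ∫ x' in Z i, outDegree μ V x' ∂μ
      = ∑ j, ∫ x' in Z i, ∫ y in Z j, V x' y ∂μ ∂μ := by
    rw [← integral_finsetSum (f := fun j x' => ∫ y in Z j, V x' y ∂μ) _ fun j _ =>
      (hV.integrable_prod (μ := μ.restrict (Z i)) (μ.restrict (Z j))).integral_prod_left]
    refine setIntegral_congr_fun (hZm i) fun x' _ => ?_
    exact integral_eq_sum_setIntegral hZm hZd hZ fun j => (hV.integrable_left x').integrableOn
  rw [hrow, setAverage_eq, hcol, smul_eq_mul, Finset.mul_sum]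
  refine Finset.sum_congr rfl fun j _ => ?_
  have hj : μ.real (Z j) ≠ 0 := (ENNReal.toReal_pos (hZpos j) (measure_ne_top μ _)).ne'
  rw [blockAverage, mul_inv]
  field_simp

end Partition

noncomputable def stepApprox {ι : Type*} [Fintype ι] (μ : Measure α) (Z : ι → Set α)
    (V : α → α → ℝ) : α → α → ℝ :=
  extendByHalf (⋃ i, Z i) (stepKernel Z fun i j => blockAverage μ V (Z i) (Z j))

section StepApprox

variable {ι : Type*} [Fintype ι] {μ : Measure α} {Z : ι → Set α} {V : α → α → ℝ}

lemma stepApprox_apply_of_mem (hZd : Pairwise (Disjoint on Z)) {i j : ι} {x y : α}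
    (hx : x ∈ Z i) (hy : y ∈ Z j) : stepApprox μ Z V x y = blockAverage μ V (Z i) (Z j) := by
  rw [stepApprox, extendByHalf_of_mem (mem_iUnion_of_mem i hx) (mem_iUnion_of_mem j hy),
    stepKernel_apply_of_mem hZd hx hy]

lemma IsTournamentKernel.stepApprox [IsFiniteMeasure μ] (hV : IsTournamentKernel V)
    (hZm : ∀ i, MeasurableSet (Z i)) (hZd : Pairwise (Disjoint on Z))
    (hZpos : ∀ i, μ (Z i) ≠ 0) : IsTournamentKernel (stepApprox μ Z V) :=
  isTournamentKernel_extendByHalf_stepKernel hZm hZd (fun _ _ => blockAverage_nonneg hV.nonneg)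
    fun i j => hV.blockAverage_add_swap (hZpos i) (hZpos j)

theorem integral_cycle3_le_stepApprox [IsProbabilityMeasure μ] (hV : IsTournamentKernel V)
    (hZm : ∀ i, MeasurableSet (Z i)) (hZd : Pairwise (Disjoint on Z))
    (hZ : ∀ᵐ x ∂μ, x ∈ ⋃ i, Z i) (hZpos : ∀ i, μ (Z i) ≠ 0) :
    ∫ x, ∫ y, ∫ z, V x y * V y z * V z x ∂μ ∂μ ∂μ
      ≤ ∫ x, ∫ y, ∫ z, stepApprox μ Z V x y * stepApprox μ Z V y z * stepApprox μ Z V z x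
          ∂μ ∂μ ∂μ := by
  have hV' := hV.stepApprox hZm hZd hZpos
  have hdeg : ∀ i, ∀ x ∈ Z i,
      outDegree μ (stepApprox μ Z V) x = ⨍ x' in Z i, outDegree μ V x' ∂μ :=
    fun i x hx => outDegree_eq_setAverage hZm hZd hZ hZpos hV hV'
      (fun i j x hx y hy => stepApprox_apply_of_mem hZd hx hy) hx
  have hsq := integral_sq_le_of_eq_setAverage hZm hZd hZ hV.integrable_outDegree
    hV.integrable_outDegree_sq hdeg
  rw [hV.integral_cycle3_eq, hV'.integral_cycle3_eq]
  linarith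

end StepApprox

lemma blockAverage_restrict_extendByHalf {ν : Measure α} {W : α → α → ℝ} {s t u : Set α}
    (ht : MeasurableSet t) (hu : MeasurableSet u) (hts : t ⊆ s) (hus : u ⊆ s) :
    blockAverage (ν.restrict s) (extendByHalf s W) t u = blockAverage ν W t u := by
  rw [blockAverage, blockAverage, Measure.restrict_restrict_of_subset hts,
    Measure.restrict_restrict_of_subset hus, measureReal_def, measureReal_def,
    Measure.restrict_eq_self _ hts, Measure.restrict_eq_self _ hus, ← measureReal_def,
    ← measureReal_def]
  congr 1
  refine setIntegral_congr_fun ht fun x hx => setIntegral_congr_fun hu fun y hy => ?_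
  exact extendByHalf_of_mem (hts hx) (hus hy)

lemma cycle3Density_congr {F G : ℝ → ℝ → ℝ}
    (h : ∀ x ∈ Icc (0 : ℝ) 1, ∀ y ∈ Icc (0 : ℝ) 1, F x y = G x y) :
    cycle3Density F = cycle3Density G := by
  refine setIntegral_congr_fun measurableSet_Icc fun x hx => ?_
  refine setIntegral_congr_fun measurableSet_Icc fun y hy => ?_
  refine setIntegral_congr_fun measurableSet_Icc fun z hz => ?_
  rw [h x hx y hy, h y hy z hz, h z hz x hx]

/-- A step approximation of a tournament limit does not decrease the density
of C₃. -/
theorem stmt_13 (W : ℝ → ℝ → ℝ)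
    (hmeas : Measurable (Function.uncurry W))
    (hrange : ∀ x ∈ Set.Icc (0:ℝ) 1, ∀ y ∈ Set.Icc (0:ℝ) 1, W x y ∈ Set.Icc (0:ℝ) 1)
    (hsym : ∀ x ∈ Set.Icc (0:ℝ) 1, ∀ y ∈ Set.Icc (0:ℝ) 1, W x y + W y x = 1)
    (n : ℕ) (hn : 0 < n) (Z : Fin n → Set ℝ)
    (hZmeas : ∀ i, MeasurableSet (Z i))
    (hZdisj : ∀ i j, i ≠ j → Disjoint (Z i) (Z j))
    (hZunion : (⋃ i, Z i) = Set.Icc (0:ℝ) 1)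
    (hZvol : ∀ i, volume (Z i) = ENNReal.ofReal (1 / n))
    (W' : ℝ → ℝ → ℝ)
    (hW' : ∀ i j, ∀ x ∈ Z i, ∀ y ∈ Z j,
      W' x y = (n : ℝ) ^ 2 * ∫ x' in Z i, ∫ y' in Z j, W x' y') :
    cycle3Density W ≤ cycle3Density W' := by
  have hZd : Pairwise (Disjoint on Z) := fun i j => hZdisj i j
  have hZsub : ∀ i, Z i ⊆ Icc (0 : ℝ) 1 := fun i => hZunion ▸ subset_iUnion Z i
  set μ := volume.restrict (Icc (0 : ℝ) 1)
  have : IsProbabilityMeasure μ := ⟨by simp [μ, Real.volume_Icc]⟩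
  have hZpos : ∀ i, μ (Z i) ≠ 0 := fun i => by
    rw [Measure.restrict_eq_self _ (hZsub i), hZvol i, Ne, ENNReal.ofReal_eq_zero, not_le]
    positivity
  set V := extendByHalf (Icc (0 : ℝ) 1) W
  have hV : IsTournamentKernel V := isTournamentKernel_extendByHalf measurableSet_Icc hmeas
    (fun x hx y hy => (hrange x hx y hy).1) hsym
  have hW'V : ∀ x ∈ Icc (0 : ℝ) 1, ∀ y ∈ Icc (0 : ℝ) 1,
      W' x y = stepApprox μ Z V x y := by
    intro x hx y hy
    obtain ⟨i, hi⟩ := mem_iUnion.1 (hZunion ▸ hx)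
    obtain ⟨j, hj⟩ := mem_iUnion.1 (hZunion ▸ hy)
    rw [hW' i j x hi y hj, stepApprox_apply_of_mem hZd hi hj,
      blockAverage_restrict_extendByHalf (hZmeas i) (hZmeas j) (hZsub i) (hZsub j),
      blockAverage_eq_of_measure_eq (hZvol i) (hZvol j)]
  calc cycle3Density W = cycle3Density V :=
        cycle3Density_congr fun x hx y hy => (extendByHalf_of_mem hx hy).symm
    _ ≤ cycle3Density (stepApprox μ Z V) := integral_cycle3_le_stepApprox hV hZmeas hZd
        (by rw [hZunion]; exact ae_restrict_mem measurableSet_Icc) hZpos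
    _ = cycle3Density W' := cycle3Density_congr fun x hx y hy => (hW'V x hx y hy).symm
end

section
/- Let W be a tournament limit and let z be a real number with 1/2 ≤ z ≤ 1 such that t(C₃,W) = (z³ + (1−z)³)/8. Then t(C₄,W) ≥ (z⁴ + (1−z)⁴)/16. -/
/-!
Write `W = 1/2 + f` with `f` antisymmetric, let `F` be the integral operator with kernel `f`,
`δ = F 1` (so that the out-degree of `x` is `1/2 + δ x`) and `D = ‖δ‖²`. Expanding the products
gives `t(C₃) = 1/8 - 3D/2` and `t(C₄) = 1/16 - D + ‖F²‖²`, where `‖F²‖²` is the squared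
`L²` norm of the kernel of `F²`. The hypothesis forces `D = z(1-z)/4`, and then
`(z⁴ + (1-z)⁴)/16 = 1/16 - D + 2D²`, so it remains to show `‖F²‖² ≥ 2D²`.
By antisymmetry `⟨1, δ⟩ = ⟨1, F 1⟩ = 0`, so Bessel's inequality for the orthogonal pair `1, δ`,
applied to each row of the kernel of `F²` and integrated, gives `‖F²‖² ≥ ‖F² 1‖² + ‖F² δ‖²/D`.
Again by antisymmetry `⟨1, F² 1⟩ = -D` and `⟨δ, F² δ⟩ = -‖F δ‖² = -‖F² 1‖²`, so Cauchy–Schwarz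
bounds both terms below by `D²`.
-/

open MeasureTheory

/-- The density of the directed four-cycle C₄ in a tournament limit. -/
noncomputable def cycle4Density (W : ℝ → ℝ → ℝ) : ℝ :=
  ∫ x in Set.Icc (0:ℝ) 1, ∫ y in Set.Icc (0:ℝ) 1, ∫ z in Set.Icc (0:ℝ) 1,
    ∫ u in Set.Icc (0:ℝ) 1, W x y * W y z * W z u * W u x

open Function

@[fun_prop]
def BddMeasurable {β : Type*} [MeasurableSpace β] (u : β → ℝ) : Prop :=
  Measurable u ∧ ∃ C, ∀ x, |u x| ≤ C

namespace BddMeasurable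

variable {β γ : Type*} [MeasurableSpace β] [MeasurableSpace γ]

@[fun_prop]
lemma const (c : ℝ) : BddMeasurable fun _ : β => c :=
  ⟨measurable_const, |c|, fun _ => le_rfl⟩

@[fun_prop]
lemma comp {u : γ → ℝ} {φ : β → γ} (hu : BddMeasurable u) (hφ : Measurable φ) :
    BddMeasurable fun x => u (φ x) :=
  ⟨hu.1.comp hφ, hu.2.imp fun _ h x => h (φ x)⟩

@[fun_prop]
lemma add {u v : β → ℝ} (hu : BddMeasurable u) (hv : BddMeasurable v) :
    BddMeasurable fun x => u x + v x := by
  obtain ⟨hu, C, hC⟩ := hu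
  obtain ⟨hv, D, hD⟩ := hv
  exact ⟨hu.add hv, C + D, fun x => (abs_add_le _ _).trans (add_le_add (hC x) (hD x))⟩

@[fun_prop]
lemma sub {u v : β → ℝ} (hu : BddMeasurable u) (hv : BddMeasurable v) :
    BddMeasurable fun x => u x - v x := by
  obtain ⟨hu, C, hC⟩ := hu
  obtain ⟨hv, D, hD⟩ := hv
  exact ⟨hu.sub hv, C + D, fun x => (abs_sub _ _).trans (add_le_add (hC x) (hD x))⟩

@[fun_prop]
lemma mul {u v : β → ℝ} (hu : BddMeasurable u) (hv : BddMeasurable v) :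
    BddMeasurable fun x => u x * v x := by
  obtain ⟨hu, C, hC⟩ := hu
  obtain ⟨hv, D, hD⟩ := hv
  refine ⟨hu.mul hv, C * D, fun x => ?_⟩
  rw [abs_mul]
  exact mul_le_mul (hC x) (hD x) (abs_nonneg _) ((abs_nonneg _).trans (hC x))

@[fun_prop]
lemma div_const {u : β → ℝ} (hu : BddMeasurable u) (c : ℝ) :
    BddMeasurable fun x => u x / c := by
  simpa only [div_eq_mul_inv] using hu.mul (const c⁻¹)

@[fun_prop]
lemma pow {u : β → ℝ} (hu : BddMeasurable u) (n : ℕ) : BddMeasurable fun x => u x ^ n := by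
  obtain ⟨hu, C, hC⟩ := hu
  refine ⟨hu.pow_const n, C ^ n, fun x => ?_⟩
  rw [abs_pow]
  exact pow_le_pow_left₀ (abs_nonneg _) (hC x) n

@[fun_prop]
lemma integral {F : β → γ → ℝ} (hF : BddMeasurable (uncurry F)) (ν : Measure γ)
    [IsFiniteMeasure ν] : BddMeasurable fun x => ∫ y, F x y ∂ν := by
  obtain ⟨hm, C, hC⟩ := hF
  refine ⟨hm.stronglyMeasurable.integral_prod_right.measurable, C * ν.real Set.univ, fun x => ?_⟩
  simpa only [Real.norm_eq_abs] using
    norm_integral_le_of_norm_le_const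
      (ae_of_all ν fun y => (Real.norm_eq_abs (F x y)).trans_le (hC (x, y)))

end BddMeasurable

lemma MeasureTheory.Integrable.of_bddMeasurable {β : Type*} [MeasurableSpace β] {μ : Measure β}
    [IsFiniteMeasure μ] {u : β → ℝ} (hu : BddMeasurable u) : Integrable u μ := by
  obtain ⟨hm, C, hC⟩ := hu
  exact (integrable_const C).mono' hm.aestronglyMeasurable (ae_of_all _ fun x => hC x)

section Kernel

variable {α : Type*} [MeasurableSpace α] {μ : Measure α} {K L : α → α → ℝ} {u v : α → ℝ}

variable (μ) in
noncomputable def kernelOp (K : α → α → ℝ) (u : α → ℝ) (x : α) : ℝ := ∫ y, K x y * u y ∂μ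

variable (μ) in
noncomputable def kernelComp (K L : α → α → ℝ) (x z : α) : ℝ := ∫ y, K x y * L y z ∂μ

lemma kernelOp_one (x : α) : kernelOp μ K (fun _ => 1) x = ∫ y, K x y ∂μ := by
  simp only [kernelOp, mul_one]

lemma integral_left_eq_neg_kernelOp_one_of_antisymm (hanti : ∀ x y, K y x = -K x y) (z : α) :
    ∫ y, K y z ∂μ = -kernelOp μ K (fun _ => 1) z := by
  simp only [kernelOp_one, ← integral_neg]
  congr 1; ext y
  rw [hanti z y]

lemma kernelComp_self_symm_of_antisymm (hanti : ∀ x y, K y x = -K x y) (x z : α) :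
    kernelComp μ K K z x = kernelComp μ K K x z := by
  unfold kernelComp
  congr 1; ext y
  rw [hanti x y, hanti y z]
  ring

variable [IsFiniteMeasure μ]

@[fun_prop]
lemma BddMeasurable.kernelOp (hK : BddMeasurable (uncurry K)) (hu : BddMeasurable u) :
    BddMeasurable (kernelOp μ K u) :=
  BddMeasurable.integral (F := fun x y => K x y * u y) (by fun_prop) μ

@[fun_prop]
lemma BddMeasurable.kernelComp (hK : BddMeasurable (uncurry K))
    (hL : BddMeasurable (uncurry L)) : BddMeasurable (uncurry (kernelComp μ K L)) :=
  BddMeasurable.integral (F := fun (p : α × α) y => K p.1 y * L y p.2) (by fun_prop) μ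

lemma integral_integral_eq_zero_of_antisymm {F : α → α → ℝ} (hF : BddMeasurable (uncurry F))
    (hanti : ∀ x y, F y x = -F x y) : ∫ x, ∫ y, F x y ∂μ ∂μ = 0 := by
  have h : ∫ x, ∫ y, F x y ∂μ ∂μ = -∫ x, ∫ y, F x y ∂μ ∂μ := calc
    _ = ∫ y, ∫ x, F x y ∂μ ∂μ := integral_integral_swap (.of_bddMeasurable hF)
    _ = -∫ x, ∫ y, F x y ∂μ ∂μ := by
      rw [← integral_neg]; congr 1; ext y
      rw [← integral_neg]; congr 1; ext x
      exact hanti y x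
  linarith

lemma integral_mul_kernelOp_of_antisymm (hK : BddMeasurable (uncurry K))
    (hanti : ∀ x y, K y x = -K x y) (hu : BddMeasurable u) (hv : BddMeasurable v) :
    ∫ x, u x * kernelOp μ K v x ∂μ = -∫ y, kernelOp μ K u y * v y ∂μ := calc
  ∫ x, u x * kernelOp μ K v x ∂μ = ∫ x, ∫ y, u x * K x y * v y ∂μ ∂μ := by
    simp only [kernelOp, ← integral_const_mul, mul_assoc]
  _ = ∫ y, ∫ x, u x * K x y * v y ∂μ ∂μ :=
    integral_integral_swap (.of_bddMeasurable (by fun_prop))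
  _ = -∫ y, kernelOp μ K u y * v y ∂μ := by
    simp only [kernelOp, ← integral_mul_const, ← integral_neg]
    congr 1; ext y; congr 1; ext x
    rw [hanti y x]
    ring

lemma integral_kernelOp_one_of_antisymm (hK : BddMeasurable (uncurry K))
    (hanti : ∀ x y, K y x = -K x y) : ∫ x, kernelOp μ K (fun _ => 1) x ∂μ = 0 := by
  simpa only [kernelOp_one] using integral_integral_eq_zero_of_antisymm hK hanti

lemma integral_kernelOp_kernelOp_one_of_antisymm (hK : BddMeasurable (uncurry K))
    (hanti : ∀ x y, K y x = -K x y) :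
    ∫ x, kernelOp μ K (kernelOp μ K fun _ => 1) x ∂μ
      = -∫ x, kernelOp μ K (fun _ => 1) x ^ 2 ∂μ := by
  simpa only [one_mul, sq] using
    integral_mul_kernelOp_of_antisymm (μ := μ) hK hanti (u := fun _ => 1)
      (v := kernelOp μ K fun _ => 1) (by fun_prop) (by fun_prop)

lemma integral_kernelComp_mul (hK : BddMeasurable (uncurry K)) (hL : BddMeasurable (uncurry L))
    (hu : BddMeasurable u) (x : α) :
    ∫ z, kernelComp μ K L x z * u z ∂μ = kernelOp μ K (kernelOp μ L u) x := calc
  ∫ z, kernelComp μ K L x z * u z ∂μ = ∫ z, ∫ y, K x y * (L y z * u z) ∂μ ∂μ := by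
    simp only [kernelComp, ← integral_mul_const, mul_assoc]
  _ = ∫ y, ∫ z, K x y * (L y z * u z) ∂μ ∂μ :=
    integral_integral_swap (.of_bddMeasurable (by fun_prop))
  _ = kernelOp μ K (kernelOp μ L u) x := by
    simp only [kernelOp, integral_const_mul]

lemma integral_kernelComp (hK : BddMeasurable (uncurry K)) (hL : BddMeasurable (uncurry L))
    (x : α) : ∫ z, kernelComp μ K L x z ∂μ = kernelOp μ K (kernelOp μ L fun _ => 1) x := by
  simpa only [mul_one] using integral_kernelComp_mul (μ := μ) hK hL (BddMeasurable.const 1) x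

end Kernel

section CauchySchwarz

variable {α : Type*} [MeasurableSpace α] {μ : Measure α} {u v e : α → ℝ}

lemma sq_integral_mul_le [IsFiniteMeasure μ] (hu : BddMeasurable u) (hv : BddMeasurable v) :
    (∫ x, u x * v x ∂μ) ^ 2 ≤ (∫ x, u x ^ 2 ∂μ) * ∫ x, v x ^ 2 ∂μ := by
  have hquad : ∀ t, 0 ≤ (∫ x, v x ^ 2 ∂μ) * (t * t) + (-2 * ∫ x, u x * v x ∂μ) * t
      + ∫ x, u x ^ 2 ∂μ := by
    intro t
    have expand : ∀ x, (u x - t * v x) ^ 2 = u x ^ 2 - 2 * t * (u x * v x) + t ^ 2 * v x ^ 2 :=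
      fun x => by ring
    have h := integral_nonneg (μ := μ) (f := fun x => (u x - t * v x) ^ 2) fun x => sq_nonneg _
    simp only [expand] at h
    rw [integral_add, integral_sub, integral_const_mul, integral_const_mul] at h
    · linarith
    all_goals exact .of_bddMeasurable (by fun_prop)
  have := discrim_le_zero hquad
  rw [discrim] at this
  linarith

lemma sq_integral_le_integral_sq [IsProbabilityMeasure μ] (hu : BddMeasurable u) :
    (∫ x, u x ∂μ) ^ 2 ≤ ∫ x, u x ^ 2 ∂μ := by
  simpa using sq_integral_mul_le (μ := μ) hu (BddMeasurable.const 1)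

lemma sq_integral_add_sq_integral_mul_div_le [IsProbabilityMeasure μ] (hv : BddMeasurable v)
    (he : BddMeasurable e) (he0 : ∫ x, e x ∂μ = 0) :
    (∫ x, v x ∂μ) ^ 2 + (∫ x, v x * e x ∂μ) ^ 2 / ∫ x, e x ^ 2 ∂μ ≤ ∫ x, v x ^ 2 ∂μ := by
  set a := ∫ x, v x ∂μ
  have hcs := sq_integral_mul_le (μ := μ) (u := fun x => v x - a) (by fun_prop) he
  have hcov : ∫ x, (v x - a) * e x ∂μ = ∫ x, v x * e x ∂μ := by
    simp only [sub_mul]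
    rw [integral_sub, integral_const_mul, he0, mul_zero, sub_zero]
    all_goals exact .of_bddMeasurable (by fun_prop)
  have hvar : ∫ x, (v x - a) ^ 2 ∂μ = ∫ x, v x ^ 2 ∂μ - a ^ 2 := by
    have expand : ∀ x, (v x - a) ^ 2 = v x ^ 2 - 2 * a * v x + a ^ 2 := fun x => by ring
    simp only [expand]
    rw [integral_add, integral_sub, integral_const_mul, integral_const, probReal_univ, smul_eq_mul,
      one_mul]
    · ring
    all_goals exact .of_bddMeasurable (by fun_prop)
  have hvar0 : 0 ≤ ∫ x, v x ^ 2 ∂μ - a ^ 2 := hvar ▸ integral_nonneg fun x => sq_nonneg _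
  rw [hcov, hvar] at hcs
  have := div_le_of_le_mul₀ (integral_nonneg fun x => sq_nonneg (e x)) hvar0 hcs
  linarith

end CauchySchwarz

section Tournament

variable {α : Type*} [MeasurableSpace α] {μ : Measure α}

variable (μ) in
noncomputable def triangleDensity (W : α → α → ℝ) : ℝ :=
  ∫ x, ∫ y, ∫ z, W x y * W y z * W z x ∂μ ∂μ ∂μ

variable (μ) in
noncomputable def fourCycleDensity (W : α → α → ℝ) : ℝ :=
  ∫ x, ∫ y, ∫ z, ∫ u, W x y * W y z * W z u * W u x ∂μ ∂μ ∂μ ∂μ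

lemma triangleDensity_eq_integral_mul_kernelComp (W : α → α → ℝ) :
    triangleDensity μ W = ∫ x, ∫ y, W x y * kernelComp μ W W y x ∂μ ∂μ := by
  simp only [triangleDensity, kernelComp, ← integral_const_mul, mul_assoc]

lemma fourCycleDensity_eq_integral_kernelComp_mul [IsFiniteMeasure μ] {W : α → α → ℝ}
    (hW : BddMeasurable (uncurry W)) :
    fourCycleDensity μ W = ∫ x, ∫ z, kernelComp μ W W x z * kernelComp μ W W z x ∂μ ∂μ := by
  unfold fourCycleDensity
  congr 1; ext x
  calc ∫ y, ∫ z, ∫ u, W x y * W y z * W z u * W u x ∂μ ∂μ ∂μ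
      = ∫ y, ∫ z, W x y * W y z * kernelComp μ W W z x ∂μ ∂μ := by
        simp only [kernelComp, ← integral_const_mul, mul_assoc]
    _ = ∫ z, ∫ y, W x y * W y z * kernelComp μ W W z x ∂μ ∂μ :=
        integral_integral_swap (.of_bddMeasurable (by fun_prop))
    _ = ∫ z, kernelComp μ W W x z * kernelComp μ W W z x ∂μ := by
        simp only [kernelComp, integral_mul_const]

variable [IsProbabilityMeasure μ] {f : α → α → ℝ}

local notation "δ" => kernelOp μ f fun _ => 1

lemma kernelComp_half_add (hf : BddMeasurable (uncurry f)) (hanti : ∀ x y, f y x = -f x y)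
    (x z : α) :
    kernelComp μ (fun x y => 1 / 2 + f x y) (fun x y => 1 / 2 + f x y) x z
      = 1 / 4 + (δ x - δ z) / 2 + kernelComp μ f f x z := by
  have expand : ∀ y, (1 / 2 + f x y) * (1 / 2 + f y z)
      = 1 / 4 + f x y / 2 + f y z / 2 + f x y * f y z := fun y => by ring
  simp only [kernelComp, expand]
  rw [integral_add, integral_add, integral_add, integral_const, integral_div, integral_div,
    integral_left_eq_neg_kernelOp_one_of_antisymm hanti]
  · simp only [kernelOp_one, probReal_univ, smul_eq_mul, one_mul]
    ring
  all_goals exact .of_bddMeasurable (by fun_prop)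

theorem triangleDensity_half_add (hf : BddMeasurable (uncurry f))
    (hanti : ∀ x y, f y x = -f x y) :
    triangleDensity μ (fun x y => 1 / 2 + f x y) = 1 / 8 - 3 / 2 * ∫ x, δ x ^ 2 ∂μ := by
  have inner : ∀ x, ∫ y, (1 / 2 + f x y)
      * kernelComp μ (fun x y => 1 / 2 + f x y) (fun x y => 1 / 2 + f x y) y x ∂μ
      = 1 / 8 - δ x ^ 2 / 2 + kernelOp μ f δ x + ∫ y, f x y * kernelComp μ f f x y ∂μ := by
    intro x
    have expand : ∀ y, (1 / 2 + f x y)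
        * kernelComp μ (fun x y => 1 / 2 + f x y) (fun x y => 1 / 2 + f x y) y x
        = (1 / 8 - δ x / 4) + δ y / 4 + kernelComp μ f f x y / 2 + (1 / 4 - δ x / 2) * f x y
          + f x y * δ y / 2 + f x y * kernelComp μ f f x y := by
      intro y
      rw [kernelComp_half_add hf hanti, kernelComp_self_symm_of_antisymm hanti x y]
      ring
    have hq : ∫ y, f x y * δ y ∂μ = kernelOp μ f δ x := rfl
    simp only [expand]
    rw [integral_add, integral_add, integral_add, integral_add, integral_add, integral_const,
      integral_div, integral_div, integral_const_mul, integral_div, hq,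
      integral_kernelOp_one_of_antisymm hf hanti, integral_kernelComp hf hf, ← kernelOp_one x]
    · simp only [probReal_univ, smul_eq_mul, one_mul]
      ring
    all_goals exact .of_bddMeasurable (by fun_prop)
  have htrace : ∫ x, ∫ y, f x y * kernelComp μ f f x y ∂μ ∂μ = 0 :=
    integral_integral_eq_zero_of_antisymm (by fun_prop) fun x y => by
      rw [hanti, kernelComp_self_symm_of_antisymm hanti, neg_mul]
  rw [triangleDensity_eq_integral_mul_kernelComp]
  simp only [inner]
  rw [integral_add, integral_add, integral_sub, integral_const, integral_div,
    integral_kernelOp_kernelOp_one_of_antisymm hf hanti, htrace]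
  · simp only [probReal_univ, smul_eq_mul, one_mul]
    ring
  all_goals exact .of_bddMeasurable (by fun_prop)

theorem fourCycleDensity_half_add (hf : BddMeasurable (uncurry f))
    (hanti : ∀ x y, f y x = -f x y) :
    fourCycleDensity μ (fun x y => 1 / 2 + f x y)
      = 1 / 16 - ∫ x, δ x ^ 2 ∂μ + ∫ x, ∫ z, kernelComp μ f f x z ^ 2 ∂μ ∂μ := by
  set W := fun x y => 1 / 2 + f x y
  have inner : ∀ x, ∫ z, kernelComp μ W W x z * kernelComp μ W W z x ∂μ
      = 1 / 16 - (∫ z, δ z ^ 2 ∂μ) / 4 - δ x ^ 2 / 4 + kernelOp μ f δ x / 2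
        + ∫ z, kernelComp μ f f x z ^ 2 ∂μ := by
    intro x
    -- `kernelComp μ W W` has symmetric part `1/4 + kernelComp μ f f` and antisymmetric part
    -- `(δ x - δ z)/2`, so this product is a difference of two squares.
    have expand : ∀ z, kernelComp μ W W x z * kernelComp μ W W z x
        = (1 / 16 - δ x ^ 2 / 4) + kernelComp μ f f x z / 2 + kernelComp μ f f x z ^ 2
          + δ x / 2 * δ z - δ z ^ 2 / 4 := by
      intro z
      rw [kernelComp_half_add hf hanti, kernelComp_half_add hf hanti,
        kernelComp_self_symm_of_antisymm hanti x z]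
      ring
    simp only [expand]
    rw [integral_sub, integral_add, integral_add, integral_add, integral_const, integral_div,
      integral_div, integral_const_mul, integral_kernelComp hf hf,
      integral_kernelOp_one_of_antisymm hf hanti]
    · simp only [probReal_univ, smul_eq_mul, one_mul]
      ring
    all_goals exact .of_bddMeasurable (by fun_prop)
  rw [fourCycleDensity_eq_integral_kernelComp_mul (by fun_prop)]
  simp only [inner]
  rw [integral_add, integral_add, integral_sub, integral_const, integral_div, integral_div,
    integral_kernelOp_kernelOp_one_of_antisymm hf hanti]
  · simp only [probReal_univ, smul_eq_mul, one_mul]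
    ring
  all_goals exact .of_bddMeasurable (by fun_prop)

theorem two_mul_sq_le_integral_kernelComp_sq (hf : BddMeasurable (uncurry f))
    (hanti : ∀ x y, f y x = -f x y) :
    2 * (∫ x, δ x ^ 2 ∂μ) ^ 2 ≤ ∫ x, ∫ z, kernelComp μ f f x z ^ 2 ∂μ ∂μ := by
  set D := ∫ x, δ x ^ 2 ∂μ
  set q := kernelOp μ f δ
  set s := ∫ x, q x ^ 2 ∂μ
  set M := ∫ x, kernelOp μ f q x ^ 2 ∂μ
  have hD : 0 ≤ D := integral_nonneg fun _ => sq_nonneg _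
  have hrow : ∀ x, q x ^ 2 + kernelOp μ f q x ^ 2 / D ≤ ∫ z, kernelComp μ f f x z ^ 2 ∂μ := by
    intro x
    have h := sq_integral_add_sq_integral_mul_div_le (μ := μ) (v := kernelComp μ f f x)
      (by fun_prop) (by fun_prop) (integral_kernelOp_one_of_antisymm hf hanti)
    rwa [integral_kernelComp hf hf, integral_kernelComp_mul hf hf (by fun_prop)] at h
  have hT : s + M / D ≤ ∫ x, ∫ z, kernelComp μ f f x z ^ 2 ∂μ ∂μ := by
    have h := integral_mono (μ := μ) (.of_bddMeasurable (by fun_prop))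
      (.of_bddMeasurable (by fun_prop)) hrow
    rwa [integral_add, integral_div] at h
    all_goals exact .of_bddMeasurable (by fun_prop)
  have hs : D ^ 2 ≤ s := by
    have h := sq_integral_le_integral_sq (μ := μ) (u := q) (by fun_prop)
    rwa [integral_kernelOp_kernelOp_one_of_antisymm hf hanti, neg_sq] at h
  have hM : s ^ 2 ≤ D * M := by
    have h := sq_integral_mul_le (μ := μ) (u := δ) (v := kernelOp μ f q)
      (by fun_prop) (by fun_prop)
    rw [integral_mul_kernelOp_of_antisymm hf hanti (by fun_prop) (by fun_prop), neg_sq] at h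
    change (∫ y, q y * q y ∂μ) ^ 2 ≤ D * M at h
    simpa only [← pow_two] using h
  rcases hD.eq_or_lt with hD0 | hDpos
  · rw [← hD0, sq, mul_zero, mul_zero]
    exact integral_nonneg fun _ => integral_nonneg fun _ => sq_nonneg _
  · have hDM : D ^ 2 ≤ M / D := by
      rw [le_div_iff₀ hDpos]
      nlinarith
    linarith

end Tournament

theorem fourCycleDensity_ge_of_triangleDensity_eq {α : Type*} [MeasurableSpace α] {μ : Measure α}
    [IsProbabilityMeasure μ] {W : α → α → ℝ} (hW : BddMeasurable (uncurry W))
    (hW1 : ∀ x y, W x y + W y x = 1) {z : ℝ}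
    (h3 : triangleDensity μ W = (z ^ 3 + (1 - z) ^ 3) / 8) :
    (z ^ 4 + (1 - z) ^ 4) / 16 ≤ fourCycleDensity μ W := by
  set f := fun x y => W x y - 1 / 2
  have hf : BddMeasurable (uncurry f) := by fun_prop
  have hanti : ∀ x y, f y x = -f x y := fun x y => by
    simp only [f]
    linarith [hW1 x y]
  have hWf : W = fun x y => 1 / 2 + f x y := by
    ext x y
    simp only [f]
    ring
  rw [hWf, triangleDensity_half_add hf hanti] at h3
  rw [hWf, fourCycleDensity_half_add hf hanti]
  have hT := two_mul_sq_le_integral_kernelComp_sq (μ := μ) hf hanti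
  have hD : ∫ x, kernelOp μ f (fun _ => 1) x ^ 2 ∂μ = z * (1 - z) / 4 := by linarith
  rw [hD] at hT
  linarith

open unitInterval in
lemma cycle3Density_eq_triangleDensity (W : ℝ → ℝ → ℝ) :
    cycle3Density W = triangleDensity volume fun x y : I => W x y := by
  simp only [cycle3Density, triangleDensity,
    ← measurePreserving_coe.integral_comp measurableEmbedding_coe]

open unitInterval in
lemma cycle4Density_eq_fourCycleDensity (W : ℝ → ℝ → ℝ) :
    cycle4Density W = fourCycleDensity volume fun x y : I => W x y := by
  simp only [cycle4Density, fourCycleDensity,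
    ← measurePreserving_coe.integral_comp measurableEmbedding_coe]

theorem stmt_14_general (W : ℝ → ℝ → ℝ)
    (hmeas : Measurable (Function.uncurry W))
    (hrange : ∀ x ∈ Set.Icc (0:ℝ) 1, ∀ y ∈ Set.Icc (0:ℝ) 1, W x y ∈ Set.Icc (0:ℝ) 1)
    (hsym : ∀ x ∈ Set.Icc (0:ℝ) 1, ∀ y ∈ Set.Icc (0:ℝ) 1, W x y + W y x = 1)
    (z : ℝ)
    (h3 : cycle3Density W = (z ^ 3 + (1 - z) ^ 3) / 8) :
    cycle4Density W ≥ (z ^ 4 + (1 - z) ^ 4) / 16 := by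
  have hW : BddMeasurable (uncurry fun x y : unitInterval => W x y) := by
    refine ⟨hmeas.comp (measurable_subtype_coe.prodMap measurable_subtype_coe), 1,
      fun ⟨x, y⟩ => ?_⟩
    obtain ⟨h0, h1⟩ := hrange x x.2 y y.2
    exact abs_le.2 ⟨by simp only [uncurry_apply_pair]; linarith, h1⟩
  rw [cycle3Density_eq_triangleDensity] at h3
  rw [cycle4Density_eq_fourCycleDensity, ge_iff_le]
  exact fourCycleDensity_ge_of_triangleDensity_eq hW (fun x y => hsym x x.2 y y.2) h3

/-- Regime of two parts for tournament limits: t(C₄,W) ≥ g(t(C₃,W)). -/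
theorem stmt_14 (W : ℝ → ℝ → ℝ)
    (hmeas : Measurable (Function.uncurry W))
    (hrange : ∀ x ∈ Set.Icc (0:ℝ) 1, ∀ y ∈ Set.Icc (0:ℝ) 1, W x y ∈ Set.Icc (0:ℝ) 1)
    (hsym : ∀ x ∈ Set.Icc (0:ℝ) 1, ∀ y ∈ Set.Icc (0:ℝ) 1, W x y + W y x = 1)
    (z : ℝ) (hz : 1/2 ≤ z) (hz1 : z ≤ 1)
    (h3 : cycle3Density W = (z ^ 3 + (1 - z) ^ 3) / 8) :
    cycle4Density W ≥ (z ^ 4 + (1 - z) ^ 4) / 16 :=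
  stmt_14_general W hmeas hrange hsym z h3
end
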